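/- arXiv:2009.10294 — 6 statements merged into one kernel-verified Lean document; each statement's English description precedes it below -/
import Mathlib

section
/- For the sequence a_i = n - i + 1 (1 ≤ i ≤ n) and Δ_s(k) = k(k-1) + Σ_{i=k+1}^{n} min{k, a_i} − Σ_{i=1}^{k} a_i, the maximum over 1 ≤ k ≤ n of −Δ_s(k) equals ⌈n/2⌉. -/
/-!
Reflecting `i ↦ n - i` turns the min-sum of `Δ_s(k)` into `∑_{j < n-k} min(k, j+1)`, a
triangular number minus the triangular number of the excess `n + 1 - 2k`. With the arithmetic
sum `∑_{i ≤ k} a_i` this gives the closed form `Δ_s(k) = C(2k - n, 2) - k` (truncated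
subtraction, so the binomial term vanishes while `2k ≤ n + 1`). Hence `-Δ_s(k) = k` up to
`k = ⌈n/2⌉`, and beyond that `C(2k - n, 2) ≥ 2k - n - 1` makes `-Δ_s(k) ≤ n + 1 - k ≤ ⌈n/2⌉`.
-/

open Finset

def erdosGallaiDeficiency (a : ℕ → ℤ) (n k : ℕ) : ℤ :=
  k * (k - 1) + ∑ i ∈ Icc (k + 1) n, min (k : ℤ) (a i) - ∑ i ∈ Icc 1 k, a i

theorem Finset.sum_Icc_succ_reflect {M : Type*} [AddCommMonoid M] (f : ℕ → M) (k n : ℕ) :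
    ∑ i ∈ Icc (k + 1) n, f (n - i) = ∑ j ∈ range (n - k), f j := by
  rw [← Ico_add_one_right_eq_Icc, sum_Ico_reflect f _ le_rfl, range_eq_Ico]
  congr 2 <;> omega

theorem Nat.two_mul_cast_choose_two {R : Type*} [CommRing R] (d : ℕ) :
    2 * (d.choose 2 : R) = d * (d - 1) := by
  rcases d with _ | d
  · simp
  · have := congrArg (Nat.cast : ℕ → R) (Nat.add_one_mul_choose_eq d 1)
    push_cast [Nat.choose_one_right] at this ⊢
    linear_combination -this

theorem Nat.sub_one_le_choose_two (d : ℕ) : d - 1 ≤ d.choose 2 := by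
  rcases d with _ | d
  · simp
  · rw [Nat.choose_succ_succ', Nat.choose_one_right]
    omega

theorem two_mul_sum_range_min_succ (k m : ℕ) :
    2 * ∑ j ∈ range m, min (k : ℤ) (j + 1)
      = m * (m + 1) - ((m - k : ℕ) : ℤ) * ((m - k : ℕ) + 1) := by
  induction m with
  | zero => simp
  | succ m ih =>
    rw [sum_range_succ, mul_add, ih]
    rcases le_or_gt k m with h | h
    · rw [Nat.succ_sub h, min_eq_left (by omega)]
      push_cast [Nat.cast_sub h]
      ring
    · rw [Nat.sub_eq_zero_of_le h.le, Nat.sub_eq_zero_of_le h, min_eq_right (by omega)]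
      push_cast
      ring

theorem two_mul_sum_Icc_descending (n k : ℕ) :
    2 * ∑ i ∈ Icc 1 k, ((n : ℤ) - i + 1) = k * (2 * n - k + 1) := by
  induction k with
  | zero => simp
  | succ k ih =>
    rw [sum_Icc_succ_top (by omega), mul_add, ih]
    push_cast
    ring

theorem sum_Icc_min_descending (n k : ℕ) :
    ∑ i ∈ Icc (k + 1) n, min (k : ℤ) ((n : ℤ) - i + 1)
      = ∑ j ∈ range (n - k), min (k : ℤ) (j + 1) := by
  rw [← sum_Icc_succ_reflect (fun j => min (k : ℤ) (j + 1))]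
  refine sum_congr rfl fun i hi => ?_
  push_cast [Nat.cast_sub (mem_Icc.1 hi).2]
  ring_nf

theorem two_mul_erdosGallaiDeficiency_descending {n k : ℕ} (hk : k ≤ n) :
    2 * erdosGallaiDeficiency (fun i => (n : ℤ) - i + 1) n k
      = ((2 * k - n : ℕ) : ℤ) * ((2 * k - n : ℕ) - 1) - 2 * k := by
  rw [erdosGallaiDeficiency, mul_sub, mul_add, sum_Icc_min_descending,
    two_mul_sum_range_min_succ, two_mul_sum_Icc_descending]
  rcases le_or_gt (2 * k) n with h | h
  · rw [Nat.sub_eq_zero_of_le h]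
    push_cast [Nat.cast_sub hk, Nat.cast_sub (show k ≤ n - k by omega)]
    ring
  · rw [Nat.sub_eq_zero_of_le (show n - k ≤ k by omega)]
    push_cast [Nat.cast_sub hk, Nat.cast_sub h.le]
    ring

theorem erdosGallaiDeficiency_descending {n k : ℕ} (hk : k ≤ n) :
    erdosGallaiDeficiency (fun i => (n : ℤ) - i + 1) n k = (2 * k - n).choose 2 - k := by
  have h := two_mul_erdosGallaiDeficiency_descending hk
  rw [← Nat.two_mul_cast_choose_two] at h
  linarith

/-- For the sequence `n, n-1, …, 1`, the maximum over `1 ≤ k ≤ n` of the negated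
Erdős–Gallai deficiency `−Δ_s(k)` equals `⌈n/2⌉`. -/
theorem max_neg_deficiency_descending (n : ℕ) (hn : 1 ≤ n) :
    IsGreatest {x : ℤ | ∃ k ∈ Finset.Icc 1 n,
        x = -((k : ℤ) * ((k : ℤ) - 1)
          + ∑ i ∈ Finset.Icc (k + 1) n, min (k : ℤ) ((n : ℤ) - (i : ℤ) + 1)
          - ∑ i ∈ Finset.Icc 1 k, ((n : ℤ) - (i : ℤ) + 1))}
      (((n + 1) / 2 : ℕ) : ℤ) := by
  change IsGreatest {x : ℤ | ∃ k ∈ Icc 1 n,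
    x = -erdosGallaiDeficiency (fun i => (n : ℤ) - i + 1) n k} _
  refine ⟨⟨(n + 1) / 2, mem_Icc.2 ⟨by omega, by omega⟩, ?_⟩, ?_⟩
  · rw [erdosGallaiDeficiency_descending (by omega), Nat.choose_eq_zero_of_lt (by omega)]
    simp
  · rintro _ ⟨k, hk, rfl⟩
    rw [erdosGallaiDeficiency_descending (mem_Icc.1 hk).2]
    have := Nat.sub_one_le_choose_two (2 * k - n)
    omega
end

section
/- For every positive integer n, the least number of edges of a finite simple graph whose degree set equals {1, 2, ..., n} is (1/2)(n(n+1)/2 + ⌈n/2⌉). -/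
/-!
For the upper bound, give vertices `0, 1, …, n` the weights `⌈n/2⌉, 1, …, n` and join two of
them when their weights sum to more than `n`: every vertex then has degree equal to its weight, so
the degree sum is `n(n+1)/2 + ⌈n/2⌉`.

For the lower bound, pick vertices `v₁, …, vₙ` with `deg vᵢ = i` and let `s` be the total degree
of the remaining vertices, so that `2|E| = n(n+1)/2 + s`. The Erdős–Gallai inequality for the
`k = ⌊n/2⌋` vertices `v_{n-k+1}, …, vₙ` gives `s ≥ k`, and for odd `n` the parity of the degree
sum rules out `s = k`.
-/

/-- The degree set of a finite simple graph: the set of distinct vertex degrees. -/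
def degreeSet {V : Type} [Fintype V] (G : SimpleGraph V) [DecidableRel G.Adj] : Finset ℕ :=
  Finset.univ.image (fun v => G.degree v)

/-- `lq D` is the least number of edges of a finite simple graph whose degree set is `D`. -/
noncomputable def lq (D : Finset ℕ) : ℕ :=
  sInf {q | ∃ (p : ℕ) (G : SimpleGraph (Fin p)) (inst : DecidableRel G.Adj),
    @degreeSet _ _ G inst = D ∧
    (@SimpleGraph.edgeFinset _ G (@SimpleGraph.fintypeEdgeSet _ G _ inst)).card = q}

open Finset

lemma sum_Icc_one_id_mul_two (n : ℕ) : (∑ i ∈ Icc 1 n, i) * 2 = n * (n + 1) := by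
  induction n with
  | zero => simp
  | succ n ih => rw [sum_Icc_succ_top (by omega), add_mul, ih]; ring

lemma sum_Icc_min_add_mul_self {k m : ℕ} (hkm : k ≤ m) :
    ∑ i ∈ Icc 1 m, min i k + k * k = ∑ i ∈ Icc (m + 1) (m + k), i := by
  induction k with
  | zero => simp
  | succ k ih =>
    have hstep : ∑ i ∈ Icc 1 m, min i (k + 1) = ∑ i ∈ Icc 1 m, min i k + (m - k) := by
      have hfilter : {i ∈ Icc 1 m | k < i} = Icc (k + 1) m := by
        ext; simp only [mem_filter, mem_Icc]; omega
      have hcount : m - k = #{i ∈ Icc 1 m | k < i} := by rw [hfilter, Nat.card_Icc]; omega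
      rw [hcount, card_filter, ← sum_add_distrib]
      exact sum_congr rfl fun i _ => by split_ifs <;> omega
    rw [hstep, ← add_assoc m k 1, sum_Icc_succ_top (by omega), ← ih (by omega)]
    grind

lemma triangle_add_half_le_of_even {n T s : ℕ} (hT : T * 2 = n * (n + 1)) (hs : n / 2 ≤ s)
    (heven : Even (T + s)) : n * (n + 1) / 2 + (n + 1) / 2 ≤ T + s := by
  obtain ⟨c, hc⟩ := heven
  obtain ⟨b, rfl | rfl⟩ := Nat.even_or_odd' n
  · have : 2 * b * (2 * b + 1) = 2 * (2 * (b * b) + b) := by ring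
    omega
  · -- for odd `n`, `T + n / 2` is odd, so `s = n / 2` is excluded
    have : (2 * b + 1) * (2 * b + 1 + 1) = 2 * (2 * (b * b) + 3 * b + 1) := by ring
    omega

namespace SimpleGraph

variable {V : Type*} [Fintype V] [DecidableEq V] (G : SimpleGraph V) [DecidableRel G.Adj]

lemma sum_degree_le_erdos_gallai (K : Finset V) :
    ∑ v ∈ K, G.degree v ≤ #K * (#K - 1) + ∑ u ∈ Kᶜ, min (G.degree u) #K := by
  have hsplit (v : V) : G.degree v = #{u ∈ K | G.Adj v u} + #{u ∈ Kᶜ | G.Adj v u} := by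
    rw [← card_union_of_disjoint (disjoint_filter_filter disjoint_compl_right), ← filter_union,
      union_compl, ← card_neighborFinset_eq_degree, neighborFinset_eq_filter]
  have hinside : ∀ v ∈ K, #{u ∈ K | G.Adj v u} ≤ #K - 1 := fun v hv => by
    rw [← card_erase_of_mem hv]
    exact card_le_card fun u hu => by
      simp only [mem_filter, mem_erase] at hu ⊢
      exact ⟨(G.ne_of_adj hu.2).symm, hu.1⟩
  have houtside (u : V) : #{v ∈ K | G.Adj v u} ≤ min (G.degree u) #K := by
    refine le_min ?_ (card_filter_le _ _)
    rw [← card_neighborFinset_eq_degree]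
    exact card_le_card fun v hv => by
      simp only [mem_filter, mem_neighborFinset] at hv ⊢
      exact hv.2.symm
  calc ∑ v ∈ K, G.degree v
      = ∑ v ∈ K, #{u ∈ K | G.Adj v u} + ∑ v ∈ K, #{u ∈ Kᶜ | G.Adj v u} := by
        rw [← sum_add_distrib]; exact sum_congr rfl fun v _ => hsplit v
    _ = ∑ v ∈ K, #{u ∈ K | G.Adj v u} + ∑ u ∈ Kᶜ, #{v ∈ K | G.Adj v u} := by
        congr 1; exact sum_card_bipartiteAbove_eq_sum_card_bipartiteBelow G.Adj
    _ ≤ ∑ _v ∈ K, (#K - 1) + ∑ u ∈ Kᶜ, min (G.degree u) #K := by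
        gcongr with v hv u
        exacts [hinside v hv, houtside u]
    _ = #K * (#K - 1) + ∑ u ∈ Kᶜ, min (G.degree u) #K := by rw [sum_const, smul_eq_mul]

omit [DecidableEq V] in
lemma injOn_of_degree_eq {s : Finset ℕ} {f : ℕ → V} (hf : ∀ i ∈ s, G.degree (f i) = i) :
    Set.InjOn f s := fun i hi j hj hij => by rw [← hf i hi, ← hf j hj, hij]

lemma sum_degree_image_of_degree_eq {s : Finset ℕ} {f : ℕ → V}
    (hf : ∀ i ∈ s, G.degree (f i) = i) (g : ℕ → ℕ) :
    ∑ v ∈ s.image f, g (G.degree v) = ∑ i ∈ s, g i := by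
  rw [sum_image (G.injOn_of_degree_eq hf)]
  exact sum_congr rfl fun i hi => by rw [hf i hi]

lemma le_sum_degree_compl_image {n k : ℕ} {f : ℕ → V} (hf : ∀ i ∈ Icc 1 n, G.degree (f i) = i)
    (hk : 2 * k ≤ n) : k ≤ ∑ v ∈ ((Icc 1 n).image f)ᶜ, G.degree v := by
  obtain ⟨m, rfl⟩ : ∃ m, n = m + k := ⟨n - k, by omega⟩
  set R := (Icc 1 (m + k)).image f
  set s := ∑ v ∈ Rᶜ, G.degree v
  set K := (Icc (m + 1) (m + k)).image f
  set L := (Icc 1 m).image f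
  have hfK : ∀ i ∈ Icc (m + 1) (m + k), G.degree (f i) = i :=
    fun i hi => hf i (Icc_subset_Icc (by omega) le_rfl hi)
  have hfL : ∀ i ∈ Icc 1 m, G.degree (f i) = i :=
    fun i hi => hf i (Icc_subset_Icc le_rfl (by omega) hi)
  have hKcard : #K = k := by
    rw [card_image_of_injOn (G.injOn_of_degree_eq hfK), Nat.card_Icc]; omega
  have hcompl : Kᶜ ⊆ L ∪ Rᶜ := fun u hu => by
    refine mem_union.2 (or_iff_not_imp_right.2 fun huR => ?_)
    obtain ⟨i, hi, rfl⟩ := mem_image.1 (notMem_compl.1 huR)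
    rw [mem_Icc] at hi
    have him : i ≤ m := by
      by_contra!
      exact mem_compl.1 hu (mem_image_of_mem f (mem_Icc.2 ⟨by omega, hi.2⟩))
    exact mem_image_of_mem f (mem_Icc.2 ⟨hi.1, him⟩)
  have hKsum : ∑ v ∈ K, G.degree v = ∑ i ∈ Icc (m + 1) (m + k), i :=
    G.sum_degree_image_of_degree_eq hfK id
  have hEG := G.sum_degree_le_erdos_gallai K
  rw [hKcard, hKsum] at hEG
  have hrest : ∑ u ∈ Kᶜ, min (G.degree u) k ≤ ∑ i ∈ Icc 1 m, min i k + s :=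
    calc ∑ u ∈ Kᶜ, min (G.degree u) k
        ≤ ∑ u ∈ L ∪ Rᶜ, min (G.degree u) k := sum_le_sum_of_subset hcompl
      _ = ∑ u ∈ L, min (G.degree u) k + ∑ u ∈ Rᶜ, min (G.degree u) k :=
          sum_union (disjoint_compl_right.mono_left
            (image_subset_image (Icc_subset_Icc le_rfl (by omega))))
      _ ≤ ∑ i ∈ Icc 1 m, min i k + s := by
          rw [G.sum_degree_image_of_degree_eq hfL (min · k)]
          exact Nat.add_le_add_left (sum_le_sum fun u _ => min_le_left _ _) _
  have htop := sum_Icc_min_add_mul_self (by omega : k ≤ m)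
  have hsq := Nat.le_mul_self k
  have hpred := Nat.mul_sub_one k k
  omega

end SimpleGraph

lemma le_two_mul_card_edgeFinset_of_Icc_subset_degreeSet {V : Type} [Fintype V] [DecidableEq V]
    (G : SimpleGraph V) [DecidableRel G.Adj] {n : ℕ} (h : Icc 1 n ⊆ degreeSet G) :
    n * (n + 1) / 2 + (n + 1) / 2 ≤ 2 * #G.edgeFinset := by
  obtain rfl | hn := Nat.eq_zero_or_pos n
  · simp
  obtain ⟨v, -⟩ : ∃ v, G.degree v = 1 := by simpa [degreeSet] using h (left_mem_Icc.2 hn)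
  have : Nonempty V := ⟨v⟩
  choose! f hf using fun i (hi : i ∈ Icc 1 n) => by simpa [degreeSet] using h hi
  set R := (Icc 1 n).image f
  have hR : ∑ v ∈ R, G.degree v = ∑ i ∈ Icc 1 n, i := G.sum_degree_image_of_degree_eq hf id
  have hsum : ∑ i ∈ Icc 1 n, i + ∑ v ∈ Rᶜ, G.degree v = 2 * #G.edgeFinset := by
    rw [← hR, sum_add_sum_compl, G.sum_degrees_eq_twice_card_edges]
  rw [← hsum]
  exact triangle_add_half_le_of_even (sum_Icc_one_id_mul_two n)
    (G.le_sum_degree_compl_image hf (Nat.mul_div_le n 2)) (hsum ▸ even_two_mul _)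

section ThresholdGraph

variable {V : Type*}

def thresholdGraph (w : V → ℕ) (t : ℕ) : SimpleGraph V where
  Adj u v := u ≠ v ∧ t ≤ w u + w v
  symm := ⟨fun u v h => ⟨h.1.symm, by rw [add_comm]; exact h.2⟩⟩
  loopless := ⟨fun _ h => h.1 rfl⟩

variable [DecidableEq V]

instance (w : V → ℕ) (t : ℕ) : DecidableRel (thresholdGraph w t).Adj :=
  fun u v => inferInstanceAs (Decidable (u ≠ v ∧ t ≤ w u + w v))

lemma degree_thresholdGraph_add_ite [Fintype V] (w : V → ℕ) (t : ℕ) (v : V) :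
    (thresholdGraph w t).degree v + (if t ≤ 2 * w v then 1 else 0) = #{u | t ≤ w v + w u} := by
  have hnbr : (thresholdGraph w t).neighborFinset v =
      ({u | t ≤ w v + w u} : Finset V).erase v := by
    ext u
    simp only [SimpleGraph.mem_neighborFinset, mem_erase, mem_filter, mem_univ, true_and]
    exact ⟨fun h => ⟨h.1.symm, h.2⟩, fun h => ⟨h.1.symm, h.2⟩⟩
  rw [← SimpleGraph.card_neighborFinset_eq_degree, hnbr]
  split_ifs with hv
  · exact card_erase_add_one (by simp only [mem_filter, mem_univ, true_and]; omega)
  · rw [erase_eq_of_notMem (by simp only [mem_filter, mem_univ, true_and]; omega), add_zero]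

end ThresholdGraph

/-- Vertices `1, …, n` joined when their labels sum to more than `n` have degrees `1, …, n`, except
that the upper half loses one; vertex `0`, of weight `⌈n/2⌉`, sees exactly that upper half. -/
def intervalWeight (n : ℕ) : Fin (n + 1) → ℕ :=
  Fin.cons ((n + 1) / 2) fun i => i + 1

abbrev intervalGraph (n : ℕ) : SimpleGraph (Fin (n + 1)) :=
  thresholdGraph (intervalWeight n) (n + 1)

lemma image_univ_val_add_one (n : ℕ) : univ.image (fun i : Fin n => (i : ℕ) + 1) = Icc 1 n := by
  ext j
  simp only [mem_image, mem_univ, true_and, mem_Icc]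
  exact ⟨fun ⟨i, hi⟩ => by omega, fun hj => ⟨⟨j - 1, by omega⟩, Nat.sub_add_cancel hj.1⟩⟩

lemma card_filter_le_intervalWeight {n c : ℕ} (hc : 1 ≤ c) :
    #{u | c ≤ intervalWeight n u} = n + 1 - c + if c ≤ (n + 1) / 2 then 1 else 0 := by
  have hrange : {i ∈ range n | c ≤ i + 1} = Ico (c - 1) n := by
    ext; simp only [mem_filter, mem_range, mem_Ico]; omega
  rw [card_filter, intervalWeight, Fin.sum_univ_succ]
  simp only [Fin.cons_zero, Fin.cons_succ]
  rw [Fin.sum_univ_eq_sum_range (fun i => if c ≤ i + 1 then 1 else 0), sum_boole, hrange,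
    Nat.card_Ico, Nat.cast_id]
  omega

lemma degree_intervalGraph {n : ℕ} (hn : 0 < n) (v : Fin (n + 1)) :
    (intervalGraph n).degree v = intervalWeight n v := by
  have hw : 1 ≤ intervalWeight n v ∧ intervalWeight n v ≤ n := by
    induction v using Fin.cases <;>
      simp only [intervalWeight, Fin.cons_zero, Fin.cons_succ] <;> omega
  have hdeg := degree_thresholdGraph_add_ite (intervalWeight n) (n + 1) v
  rw [filter_congr (q := fun u => n + 1 - intervalWeight n v ≤ intervalWeight n u)
    (fun u _ => by omega), card_filter_le_intervalWeight (by omega)] at hdeg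
  unfold intervalGraph
  split_ifs at hdeg <;> omega

lemma degreeSet_intervalGraph {n : ℕ} (hn : 0 < n) : degreeSet (intervalGraph n) = Icc 1 n := by
  ext j
  simp only [degreeSet, degree_intervalGraph hn, mem_image, mem_univ, true_and,
    Fin.exists_fin_succ, intervalWeight, Fin.cons_zero, Fin.cons_succ, mem_Icc]
  constructor
  · rintro (rfl | ⟨i, rfl⟩) <;> omega
  · intro hj
    exact Or.inr ⟨⟨j - 1, by omega⟩, Nat.sub_add_cancel hj.1⟩

lemma two_mul_card_edgeFinset_intervalGraph {n : ℕ} (hn : 0 < n) :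
    2 * #(intervalGraph n).edgeFinset = n * (n + 1) / 2 + (n + 1) / 2 := by
  rw [← SimpleGraph.sum_degrees_eq_twice_card_edges]
  simp only [degree_intervalGraph hn, intervalWeight, Fin.sum_cons]
  have hsum : ∑ i : Fin n, ((i : ℕ) + 1) = ∑ j ∈ Icc 1 n, j := by
    rw [← image_univ_val_add_one, sum_image fun i _ j _ h => by simpa [Fin.val_inj] using h]
  have hgauss := sum_Icc_one_id_mul_two n
  omega

lemma lq_le_card_edgeFinset {D : Finset ℕ} {p : ℕ} (G : SimpleGraph (Fin p)) [DecidableRel G.Adj]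
    (h : degreeSet G = D) : lq D ≤ #G.edgeFinset :=
  Nat.sInf_le ⟨p, G, _, h, rfl⟩

lemma exists_card_edgeFinset_eq_lq {D : Finset ℕ} {p : ℕ} (G : SimpleGraph (Fin p))
    [DecidableRel G.Adj] (h : degreeSet G = D) :
    ∃ (q : ℕ) (H : SimpleGraph (Fin q)) (_ : DecidableRel H.Adj),
      degreeSet H = D ∧ #H.edgeFinset = lq D :=
  Nat.sInf_mem (s := {q | ∃ (q' : ℕ) (H : SimpleGraph (Fin q')) (_ : DecidableRel H.Adj),
    degreeSet H = D ∧ #H.edgeFinset = q}) ⟨_, p, G, _, h, rfl⟩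

/-- The least number of edges of a graph with degree set `{1, 2, …, n}` is
`(1/2)(n(n+1)/2 + ⌈n/2⌉)`. -/
theorem lq_interval_one (n : ℕ) (hn : 0 < n) :
    2 * lq (Finset.Icc 1 n) = n * (n + 1) / 2 + (n + 1) / 2 := by
  obtain ⟨p, G, _, hG, hq⟩ := exists_card_edgeFinset_eq_lq _ (degreeSet_intervalGraph hn)
  refine le_antisymm ?_ ?_
  · calc 2 * lq (Icc 1 n) ≤ 2 * #(intervalGraph n).edgeFinset :=
          Nat.mul_le_mul_left 2 (lq_le_card_edgeFinset _ (degreeSet_intervalGraph hn))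
      _ = n * (n + 1) / 2 + (n + 1) / 2 := two_mul_card_edgeFinset_intervalGraph hn
  · rw [← hq]
    exact le_two_mul_card_edgeFinset_of_Icc_subset_degreeSet G hG.ge
end

section
/- Let m, n be positive integers with m(m+1) < 2⌈n/2⌉. Then the least number of edges of a graph with degree set {m, m+1, ..., n} equals (1/2)(n(n+1)/2 + ⌈n/2⌉). -/
/-!
Write `h = ⌈n/2⌉`. Lower bound: a graph with degree set `{m, …, n}` has a set `A` of vertices with
degrees `h, …, n`. A vertex of `A` has at most `|A| - 1` neighbours inside `A`, and every edge
leaving `A` is counted again in the degree sum of the complement, so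
`∑ deg ≥ 2 (h + ⋯ + n) - |A| (|A| - 1) = n(n+1)/2 + h`.

Upper bound: the half graph on `{0, …, n}` (`x ~ y` iff `x ≠ y` and `x + y ≥ n`) has degrees
`1, …, n` with only `h` repeated, hence degree sum `n(n+1)/2 + h`. Its vertex `i < m` lacks
`m - 1 - i` edges, `m(m-1)/2` in total. The pivot `h - 1` gives up that many edges to a block of
high vertices, and each block vertex is joined to one low vertex instead. The degree sum is
unchanged, the low vertices reach degree `m`, the pivot drops to `h - m(m-1)/2 > m` (this is
where `m(m+1) < 2h` enters), and degree `h` is still realised by vertex `h`.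
-/

open Finset

theorem exists_le_lt_succ {f : ℕ → ℕ} {r : ℕ} (h0 : f 0 ≤ r) :
    ∀ {k}, r < f k → ∃ x < k, f x ≤ r ∧ r < f (x + 1)
  | 0, hk => absurd hk (not_lt.2 h0)
  | k + 1, hk => by
    by_cases hr : r < f k
    · obtain ⟨x, hxk, hx⟩ := exists_le_lt_succ h0 hr
      exact ⟨x, by omega, hx⟩
    · exact ⟨k, by omega, not_lt.1 hr, hk⟩

theorem Monotone.eq_of_le_lt_succ {f : ℕ → ℕ} (hf : Monotone f) {r x y : ℕ}
    (hx : f x ≤ r ∧ r < f (x + 1)) (hy : f y ≤ r ∧ r < f (y + 1)) : x = y := by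
  by_contra hne
  exact Set.disjoint_left.1 (hf.pairwise_disjoint_on_Ico_succ hne)
    (by simpa [Order.succ_eq_add_one] using hx) (by simpa [Order.succ_eq_add_one] using hy)

theorem Finset.sum_range_ite_lt {M : Type*} [AddCommMonoid M] (f : ℕ → M) {k N : ℕ}
    (hk : k ≤ N) : ∑ i ∈ range N, (if i < k then f i else 0) = ∑ i ∈ range k, f i := by
  rw [← sum_filter]
  congr 1
  ext i
  simp only [mem_filter, mem_range]
  omega

theorem Finset.two_mul_sum_Ico_add (a k : ℕ) :
    2 * ∑ i ∈ Ico a (a + k), i = k * (k - 1) + 2 * a * k := by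
  induction k with
  | zero => simp
  | succ k ih =>
    rw [← add_assoc, sum_Ico_succ_top (by omega), mul_add, ih]
    cases k <;> simp only [Nat.add_sub_cancel] <;> ring_nf

theorem two_mul_sum_Icc_half (n : ℕ) :
    2 * ∑ d ∈ Icc ((n + 1) / 2) n, d =
      n * (n + 1) / 2 + (n + 1) / 2 + #(Icc ((n + 1) / 2) n) * (#(Icc ((n + 1) / 2) n) - 1) := by
  obtain ⟨j, rfl | rfl⟩ := Nat.even_or_odd' n
  · have hj : (2 * j + 1) / 2 = j := by omega
    have hd : 2 * j * (2 * j + 1) / 2 = j * (2 * j + 1) := by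
      rw [mul_assoc, Nat.mul_div_cancel_left _ two_pos]
    rw [hj, hd, ← Ico_add_one_right_eq_Icc, Nat.card_Ico,
      show 2 * j + 1 = j + (j + 1) by ring, two_mul_sum_Ico_add, Nat.add_sub_cancel_left,
      Nat.add_sub_cancel]
    ring
  · have hj : (2 * j + 1 + 1) / 2 = j + 1 := by omega
    have hd : (2 * j + 1) * (2 * j + 1 + 1) / 2 = (2 * j + 1) * (j + 1) := by
      rw [show 2 * j + 1 + 1 = 2 * (j + 1) by ring, mul_left_comm,
        Nat.mul_div_cancel_left _ two_pos]
    rw [hj, hd, ← Ico_add_one_right_eq_Icc, Nat.card_Ico,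
      show 2 * j + 1 + 1 = (j + 1) + (j + 1) by ring, two_mul_sum_Ico_add,
      Nat.add_sub_cancel_left, Nat.add_sub_cancel]
    ring

namespace SimpleGraph

theorem degree_eq_card_of_adj_iff {N : ℕ} (G : SimpleGraph (Fin N)) [DecidableRel G.Adj]
    (v : Fin N) (S : Finset ℕ) (hS : ∀ u : Fin N, G.Adj v u ↔ (u : ℕ) ∈ S)
    (hSN : ∀ x ∈ S, x < N) : G.degree v = #S := by
  rw [← card_neighborFinset_eq_degree, ← card_map Fin.valEmbedding]
  congr 1
  ext x
  simp only [mem_map, mem_neighborFinset, hS, Fin.valEmbedding_apply]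
  exact ⟨fun ⟨u, hu, hux⟩ => hux ▸ hu, fun hx => ⟨⟨x, hSN x hx⟩, hx, rfl⟩⟩

variable {V : Type} [Fintype V] (G : SimpleGraph V) [DecidableRel G.Adj]

theorem sum_degree_le_add_sum_compl [DecidableEq V] (A : Finset V) :
    ∑ v ∈ A, G.degree v ≤ #A * (#A - 1) + ∑ v ∈ Aᶜ, G.degree v := by
  have hsplit (v : V) :
      G.degree v = #(A.bipartiteAbove G.Adj v) + #(Aᶜ.bipartiteAbove G.Adj v) := by
    rw [← card_neighborFinset_eq_degree, neighborFinset_eq_filter, bipartiteAbove, bipartiteAbove,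
      ← card_union_of_disjoint (disjoint_filter_filter disjoint_compl_right), ← filter_union,
      union_compl]
  have hinside (v) (hv : v ∈ A) : #(A.bipartiteAbove G.Adj v) ≤ #A - 1 := by
    rw [← card_erase_of_mem hv]
    exact card_le_card fun u hu => by
      rw [mem_bipartiteAbove] at hu
      exact mem_erase.2 ⟨(G.ne_of_adj hu.2).symm, hu.1⟩
  have hcross (u) : #(A.bipartiteBelow G.Adj u) ≤ G.degree u := by
    rw [← card_neighborFinset_eq_degree]
    exact card_le_card fun v hv => by
      rw [mem_bipartiteBelow] at hv
      exact (mem_neighborFinset _ _ _).2 hv.2.symm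
  calc ∑ v ∈ A, G.degree v
      = ∑ v ∈ A, #(A.bipartiteAbove G.Adj v) + ∑ v ∈ A, #(Aᶜ.bipartiteAbove G.Adj v) := by
        rw [← sum_add_distrib]; exact sum_congr rfl fun v _ => hsplit v
    _ = ∑ v ∈ A, #(A.bipartiteAbove G.Adj v) + ∑ u ∈ Aᶜ, #(A.bipartiteBelow G.Adj u) := by
        rw [sum_card_bipartiteAbove_eq_sum_card_bipartiteBelow (r := G.Adj) (s := A) (t := Aᶜ)]
    _ ≤ ∑ v ∈ A, (#A - 1) + ∑ u ∈ Aᶜ, G.degree u :=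
        add_le_add (sum_le_sum hinside) (sum_le_sum fun u _ => hcross u)
    _ = #A * (#A - 1) + ∑ u ∈ Aᶜ, G.degree u := by rw [sum_const, smul_eq_mul]

theorem two_mul_sum_le_of_subset_degreeSet {D : Finset ℕ} (hD : D ⊆ degreeSet G) :
    2 * ∑ d ∈ D, d ≤ #D * (#D - 1) + ∑ v, G.degree v := by
  classical
  obtain ⟨A, -, hinj, rfl⟩ := exists_subset_injOn_image_eq_of_surjOn Set.univ D
    fun d hd => by simpa [degreeSet] using hD hd
  rw [sum_image hinj, card_image_of_injOn hinj, ← sum_add_sum_compl A]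
  have := G.sum_degree_le_add_sum_compl A
  omega

end SimpleGraph

theorem two_mul_lq_eq {D : Finset ℕ} {N p : ℕ} (G : SimpleGraph (Fin p)) [DecidableRel G.Adj]
    (hG : degreeSet G = D) (hN : ∑ v, G.degree v = N)
    (hle : ∀ (p : ℕ) (G : SimpleGraph (Fin p)) [DecidableRel G.Adj],
      degreeSet G = D → N ≤ ∑ v, G.degree v) :
    2 * lq D = N := by
  have hleast : IsLeast {q | ∃ (p : ℕ) (G : SimpleGraph (Fin p)) (inst : DecidableRel G.Adj),
      @degreeSet _ _ G inst = D ∧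
      (@SimpleGraph.edgeFinset _ G (@SimpleGraph.fintypeEdgeSet _ G _ inst)).card = q}
      #G.edgeFinset := by
    refine ⟨⟨p, G, inferInstance, hG, rfl⟩, ?_⟩
    rintro q ⟨p', G', inst', hG', rfl⟩
    have := hle p' G' hG'
    rw [G.sum_degrees_eq_twice_card_edges] at hN
    rw [G'.sum_degrees_eq_twice_card_edges] at this
    omega
  rw [lq, hleast.csInf_eq, ← G.sum_degrees_eq_twice_card_edges, hN]

namespace HalfGraph

/-- The number of edges the vertices `0, …, k - 1` of the half graph lack to reach degree `m`
(vertex `i` has degree `i + 1` there). -/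
def deficit (m k : ℕ) : ℕ := ∑ i ∈ range k, (m - 1 - i)

theorem deficit_succ (m k : ℕ) : deficit m (k + 1) = deficit m k + (m - 1 - k) :=
  sum_range_succ _ _

theorem deficit_mono (m : ℕ) : Monotone (deficit m) := fun _ _ hkl =>
  sum_le_sum_of_subset (range_subset_range.2 hkl)

theorem two_mul_deficit_self (m : ℕ) : 2 * deficit m m = m * (m - 1) := by
  rw [deficit, ← sum_range_reflect, mul_comm, ← sum_range_id_mul_two]
  exact congrArg (· * 2) (sum_congr rfl fun i hi => by rw [mem_range] at hi; omega)

theorem deficit_add_lt_of_mul_lt {m h : ℕ} (hm : m * (m + 1) < 2 * h) : deficit m m + m < h := by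
  have := two_mul_deficit_self m
  rcases m with _ | m
  · omega
  · simp only [Nat.add_sub_cancel] at this
    nlinarith

def pivot (n : ℕ) : ℕ := (n + 1) / 2 - 1

/-- The block of vertices that trade their edge to the pivot for one to a low vertex starts at
`n / 2 + 1`, the least neighbour of the pivot; low vertex `x` takes over its window
`[n / 2 + 1 + deficit m x, n / 2 + 1 + deficit m (x + 1))`. -/
def reroutedRel (m n x y : ℕ) : Prop :=
  (n ≤ x + y ∧ x ≠ pivot n ∧ y ≠ pivot n) ∨
  (x = pivot n ∧ n / 2 + 1 + deficit m m ≤ y) ∨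
  (x < m ∧ n / 2 + 1 + deficit m x ≤ y ∧ y < n / 2 + 1 + deficit m (x + 1))

instance (m n x y : ℕ) : Decidable (reroutedRel m n x y) := by
  unfold reroutedRel; infer_instance

def rerouted (m n : ℕ) : SimpleGraph (Fin (n + 1)) :=
  SimpleGraph.fromRel fun x y => reroutedRel m n x y

instance (m n : ℕ) : DecidableRel (rerouted m n).Adj :=
  inferInstanceAs (DecidableRel (SimpleGraph.fromRel _).Adj)

variable {m n : ℕ}

theorem rerouted_adj {x y : Fin (n + 1)} :
    (rerouted m n).Adj x y ↔
      (x : ℕ) ≠ y ∧ (reroutedRel m n x y ∨ reroutedRel m n y x) := by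
  rw [rerouted, SimpleGraph.fromRel_adj, Fin.val_ne_iff]

theorem degree_rerouted_of_lt (hfit : deficit m m + m < (n + 1) / 2) {v : Fin (n + 1)}
    (hv : (v : ℕ) < m) : (rerouted m n).degree v = m := by
  have hstep := deficit_succ m v
  have hle := deficit_mono m (show (v : ℕ) + 1 ≤ m by omega)
  rw [SimpleGraph.degree_eq_card_of_adj_iff _ v
    (Icc (n - v) n ∪ Ico (n / 2 + 1 + deficit m v) (n / 2 + 1 + deficit m (v + 1)))
    (fun u => by rw [rerouted_adj, mem_union, mem_Icc, mem_Ico]; unfold reroutedRel pivot; omega)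
    (fun x hx => by rw [mem_union, mem_Icc, mem_Ico] at hx; omega),
    card_union_of_disjoint (disjoint_left.2 fun x hx hx' => by
      rw [mem_Icc] at hx; rw [mem_Ico] at hx'; omega), Nat.card_Icc, Nat.card_Ico]
  omega

theorem degree_rerouted_pivot (hfit : deficit m m + m < (n + 1) / 2) {v : Fin (n + 1)}
    (hv : (v : ℕ) = pivot n) : (rerouted m n).degree v + deficit m m = (n + 1) / 2 := by
  rw [SimpleGraph.degree_eq_card_of_adj_iff _ v (Icc (n / 2 + 1 + deficit m m) n)
    (fun u => by
      have hle : (u : ℕ) < m → deficit m (u + 1) ≤ deficit m m := fun hu => deficit_mono m hu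
      rw [rerouted_adj, mem_Icc]; unfold reroutedRel pivot at *; omega)
    (fun x hx => by rw [mem_Icc] at hx; omega), Nat.card_Icc]
  omega

theorem degree_rerouted_of_mem_block (hfit : deficit m m + m < (n + 1) / 2) {v : Fin (n + 1)}
    (hv : n / 2 + 1 ≤ v) (hv' : v < n / 2 + 1 + deficit m m) : (rerouted m n).degree v = v := by
  obtain ⟨x, hxm, hx⟩ := exists_le_lt_succ (f := deficit m) (Nat.zero_le (v - (n / 2 + 1)))
    (show v - (n / 2 + 1) < deficit m m by omega)
  rw [SimpleGraph.degree_eq_card_of_adj_iff _ v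
    (insert x (((Icc (n - v) n).erase v).erase (pivot n)))
    (fun u => by
      have hle : (u : ℕ) < m → deficit m (u + 1) ≤ deficit m m := fun hu => deficit_mono m hu
      have huniq : deficit m u ≤ v - (n / 2 + 1) ∧ v - (n / 2 + 1) < deficit m (u + 1) →
          (u : ℕ) = x := fun hu => (deficit_mono m).eq_of_le_lt_succ hu hx
      have hxu : (u : ℕ) = x →
          deficit m u = deficit m x ∧ deficit m (u + 1) = deficit m (x + 1) := by
        rintro rfl; exact ⟨rfl, rfl⟩
      rw [rerouted_adj, mem_insert, mem_erase, mem_erase, mem_Icc]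
      unfold reroutedRel pivot at *; omega)
    (fun y hy => by rw [mem_insert, mem_erase, mem_erase, mem_Icc] at hy; omega),
    card_insert_of_notMem (by rw [mem_erase, mem_erase, mem_Icc]; unfold pivot; omega),
    card_erase_of_mem (by rw [mem_erase, mem_Icc]; unfold pivot; omega),
    card_erase_of_mem (by rw [mem_Icc]; omega), Nat.card_Icc]
  omega

theorem degree_rerouted_of_untouched (hfit : deficit m m + m < (n + 1) / 2) {v : Fin (n + 1)}
    (hmv : m ≤ v) (hv : (v : ℕ) ≠ pivot n)
    (hv' : ¬ (n / 2 + 1 ≤ v ∧ v < n / 2 + 1 + deficit m m)) :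
    (rerouted m n).degree v = v + if (v : ℕ) < (n + 1) / 2 then 1 else 0 := by
  rw [SimpleGraph.degree_eq_card_of_adj_iff _ v ((Icc (n - v) n).erase v)
    (fun u => by
      have hle : (u : ℕ) < m → deficit m (u + 1) ≤ deficit m m := fun hu => deficit_mono m hu
      rw [rerouted_adj, mem_erase, mem_Icc]; unfold reroutedRel pivot at *; omega)
    (fun y hy => by rw [mem_erase, mem_Icc] at hy; omega)]
  simp only [card_erase_eq_ite, mem_Icc, Nat.card_Icc]
  split_ifs <;> omega

/-- Each vertex has its half-graph degree, corrected by the edges it gains or gives up. -/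
theorem degree_rerouted_add_ite (hfit : deficit m m + m < (n + 1) / 2) (v : Fin (n + 1)) :
    (rerouted m n).degree v + (if (v : ℕ) = pivot n then deficit m m else 0) =
      v + (if (v : ℕ) < (n + 1) / 2 then 1 else 0) +
        (if (v : ℕ) < m then m - 1 - v else 0) := by
  by_cases hlow : (v : ℕ) < m
  · rw [degree_rerouted_of_lt hfit hlow]; unfold pivot; split_ifs <;> omega
  by_cases hpiv : (v : ℕ) = pivot n
  · have := degree_rerouted_pivot hfit hpiv; unfold pivot at *; split_ifs <;> omega
  by_cases hblock : n / 2 + 1 ≤ v ∧ v < n / 2 + 1 + deficit m m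
  · rw [degree_rerouted_of_mem_block hfit hblock.1 hblock.2]; unfold pivot at *
    split_ifs <;> omega
  · rw [degree_rerouted_of_untouched hfit (not_lt.1 hlow) hpiv hblock]; simp [hlow, hpiv]

theorem degreeSet_rerouted (hm : 0 < m) (hfit : deficit m m + m < (n + 1) / 2) :
    degreeSet (rerouted m n) = Icc m n := by
  ext d
  simp only [degreeSet, mem_image, mem_univ, true_and, mem_Icc]
  constructor
  · rintro ⟨v, rfl⟩
    have := degree_rerouted_add_ite hfit v
    have := v.2
    unfold pivot at *; split_ifs at * <;> omega
  · rintro ⟨hmd, hdn⟩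
    rcases (show d = m ∨ (m < d ∧ d ≤ pivot n) ∨ pivot n < d by omega) with rfl | hd | hd
    · exact ⟨⟨0, by omega⟩, degree_rerouted_of_lt hfit hm⟩
    · refine ⟨⟨d - 1, by omega⟩, ?_⟩
      have := degree_rerouted_add_ite hfit ⟨d - 1, by omega⟩
      dsimp only at this
      unfold pivot at *; split_ifs at this <;> omega
    · refine ⟨⟨d, by omega⟩, ?_⟩
      have := degree_rerouted_add_ite hfit ⟨d, by omega⟩
      dsimp only at this
      unfold pivot at *; split_ifs at this <;> omega

theorem sum_degree_rerouted (hfit : deficit m m + m < (n + 1) / 2) :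
    ∑ v, (rerouted m n).degree v = n * (n + 1) / 2 + (n + 1) / 2 := by
  have hsum := sum_congr rfl fun v (_ : v ∈ univ) => degree_rerouted_add_ite hfit v
  simp only [sum_add_distrib] at hsum
  rw [Fin.sum_univ_eq_sum_range (fun i => if i = pivot n then deficit m m else 0),
    Fin.sum_univ_eq_sum_range (fun i => i),
    Fin.sum_univ_eq_sum_range (fun i => if i < (n + 1) / 2 then 1 else 0),
    Fin.sum_univ_eq_sum_range (fun i => if i < m then m - 1 - i else 0),
    sum_ite_eq', if_pos (mem_range.2 (by unfold pivot; omega)),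
    sum_range_ite_lt _ (by omega), sum_range_ite_lt _ (by omega), sum_const, card_range,
    smul_eq_mul, mul_one] at hsum
  have hgauss : (∑ i ∈ range (n + 1), i) * 2 = n * (n + 1) := by
    rw [sum_range_id_mul_two, Nat.add_sub_cancel, mul_comm]
  unfold deficit at hsum
  omega

end HalfGraph

theorem lq_interval_small_m_general (m n : ℕ) (hm : 0 < m)
    (h : m * (m + 1) < 2 * ((n + 1) / 2)) :
    2 * lq (Finset.Icc m n) = n * (n + 1) / 2 + (n + 1) / 2 := by
  have hfit := HalfGraph.deficit_add_lt_of_mul_lt h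
  refine two_mul_lq_eq (HalfGraph.rerouted m n) (HalfGraph.degreeSet_rerouted hm hfit)
    (HalfGraph.sum_degree_rerouted hfit) fun p G _ hG => ?_
  have hsub : Icc ((n + 1) / 2) n ⊆ degreeSet G := hG ▸ Icc_subset_Icc (by omega) le_rfl
  have := G.two_mul_sum_le_of_subset_degreeSet hsub
  rw [two_mul_sum_Icc_half] at this
  omega

/-- If `m(m+1) < 2⌈n/2⌉` then the least size of a graph with degree set
`{m, …, n}` equals `(1/2)(n(n+1)/2 + ⌈n/2⌉)`. -/
theorem lq_interval_small_m (m n : ℕ) (hm : 0 < m) (hn : 0 < n)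
    (h : m * (m + 1) < 2 * ((n + 1) / 2)) :
    2 * lq (Finset.Icc m n) = n * (n + 1) / 2 + (n + 1) / 2 :=
  lq_interval_small_m_general m n hm h
end

section
/- Let D = {d_1 > d_2 > ... > d_n} be a set of positive integers such that d_n divides d_i for every i. Then the least number of edges of a graph with degree set D is achieved by a graph whose degree sequence contains exactly one copy of each d_i for i < n; that is, ℓ_q(D) = (1/2)(σ(D) + C*·d_n) where σ(D) = d_1 + ... + d_n and C* is the least nonnegative integer C such that the sequence d_1, ..., d_{n-1}, followed by C+1 copies of d_n, is graphic. -/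
/-- A list of natural numbers is graphic if it is the degree sequence of a
finite simple graph. -/
def IsGraphic (s : List ℕ) : Prop :=
  ∃ (G : SimpleGraph (Fin s.length)) (inst : DecidableRel G.Adj),
    ∀ i : Fin s.length, @SimpleGraph.degree _ G i (SimpleGraph.neighborSetFintype G i) = s.get i

/-- The sequence `d 1, …, d (n-1)` followed by `C + 1` copies of `d n`. -/
def seqD (n : ℕ) (d : ℕ → ℕ) (C : ℕ) : List ℕ :=
  (List.range (n - 1)).map (fun i => d (i + 1)) ++ List.replicate (C + 1) (d n)

/-!
Splitting a vertex of degree `k * m` into `k` vertices of degree `m`, each taking a block of `m`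
of its neighbours, keeps the number of edges and the degrees of all other vertices. Given a graph
with degree set `D`, keep one vertex of each degree `d i` with `i < n` and split every other
vertex (its degree is a multiple of `d n`) into vertices of degree `d n`: the result realises
`d 1, …, d (n-1)` followed by `C + 1` copies of `d n` with the same number `q` of edges, so
`2 q = σ(D) + C * d n` with `C⋆ ≤ C`. Conversely, a realisation of the sequence for `C⋆` has
degree set `D`. A graph with degree set `D` exists: split a complete graph.
-/

open Finset

theorem Fintype.card_fiber_eq_count_map {α β : Type*} [Fintype α] [DecidableEq β] (f : α → β)
    (c : β) : Fintype.card {a // f a = c} = (univ.val.map f).count c := by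
  simp [Fintype.card_subtype, Multiset.count_map, Finset.card_def, Finset.filter_val, eq_comm]

theorem Fintype.exists_card_fiber_eq {α ι : Type*} [Fintype α] [Fintype ι] [DecidableEq ι]
    (c : ι → ℕ) (h : Fintype.card α = ∑ i, c i) :
    ∃ f : α → ι, ∀ i, Fintype.card {a // f a = i} = c i := by
  let e : α ≃ Σ i, Fin (c i) := Fintype.equivOfCardEq (by simp [h])
  refine ⟨fun a => (e a).1, fun i => ?_⟩
  rw [Fintype.card_congr (e.subtypeEquiv (q := fun s => s.1 = i) fun _ => Iff.rfl),
    Fintype.card_congr (Equiv.sigmaSubtype i), Fintype.card_fin]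

theorem map_univ_sigma_eq_sum_replicate {V : Type*} [Fintype V] (k c : V → ℕ)
    (g : (Σ v, Fin (k v)) → ℕ) (hg : ∀ x, g x = c x.1) :
    univ.val.map g = ∑ v, Multiset.replicate (k v) (c v) := by
  rw [← Finset.univ_sigma_univ]
  change Multiset.map g (Multiset.sigma _ _) = _
  simp only [Multiset.sigma, Multiset.map_bind, Multiset.map_map, Function.comp_def, hg,
    Multiset.map_const', Finset.card_val, Finset.card_univ, Fintype.card_fin]
  rw [Finset.sum_eq_multiset_sum]
  rfl

theorem isGraphic_of_map_degree_eq {V : Type*} [Fintype V] (G : SimpleGraph V)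
    [DecidableRel G.Adj] {s : List ℕ}
    (h : univ.val.map (fun v => G.degree v) = (s : Multiset ℕ)) : IsGraphic s := by
  have hs : univ.val.map s.get = (s : Multiset ℕ) := by rw [Fin.univ_val_map, List.ofFn_get]
  have hcard : ∀ c, Fintype.card {i // s.get i = c} = Fintype.card {v // G.degree v = c} := by
    intro c
    rw [Fintype.card_fiber_eq_count_map, Fintype.card_fiber_eq_count_map, hs, h]
  let e : Fin s.length ≃ V := Equiv.ofFiberEquiv fun c => Fintype.equivOfCardEq (hcard c)
  refine ⟨G.comap e, inferInstance, fun i => ?_⟩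
  rw [← Equiv.ofFiberEquiv_map (fun c => Fintype.equivOfCardEq (hcard c)) i,
    ← SimpleGraph.card_neighborSet_eq_degree, ← SimpleGraph.card_neighborSet_eq_degree]
  exact Fintype.card_congr (e.subtypeEquiv fun _ => Iff.rfl)

theorem IsGraphic.exists_map_degree_eq {s : List ℕ} (h : IsGraphic s) :
    ∃ (G : SimpleGraph (Fin s.length)) (_ : DecidableRel G.Adj),
      univ.val.map (fun v => G.degree v) = (s : Multiset ℕ) := by
  obtain ⟨G, inst, hG⟩ := h
  refine ⟨G, inst, ?_⟩
  simp only [hG]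
  rw [Fin.univ_val_map, List.ofFn_get]

theorem IsGraphic.exists_degreeSet_eq {s : List ℕ} (h : IsGraphic s) :
    ∃ (G : SimpleGraph (Fin s.length)) (_ : DecidableRel G.Adj),
      degreeSet G = s.toFinset ∧ 2 * #G.edgeFinset = s.sum := by
  obtain ⟨G, _, hG⟩ := h.exists_map_degree_eq
  refine ⟨G, inferInstance, ?_, ?_⟩
  · change (univ.val.map fun v => G.degree v).toFinset = _
    rw [hG, List.toFinset_coe]
  · rw [← G.sum_degrees_eq_twice_card_edges, sum_eq_multiset_sum, hG, Multiset.sum_coe]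

namespace SimpleGraph

variable {V : Type*} (G : SimpleGraph V) {P : V → Type*} (f : ∀ v, G.neighborSet v → P v)

/-- Each vertex `v` is replaced by the vertices `P v`; the edge `uv` of `G` becomes an edge
between `⟨u, f u v⟩` and `⟨v, f v u⟩`. -/
def split : SimpleGraph (Σ v, P v) where
  Adj x y := ∃ h : G.Adj x.1 y.1, f x.1 ⟨y.1, h⟩ = x.2 ∧ f y.1 ⟨x.1, h.symm⟩ = y.2
  symm := ⟨fun _ _ ⟨h, hx, hy⟩ => ⟨h.symm, hy, hx⟩⟩
  loopless := ⟨fun _ ⟨h, _⟩ => G.loopless.irrefl _ h⟩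

def neighborSetSplitEquiv (x : Σ v, P v) :
    (G.split f).neighborSet x ≃ {w : G.neighborSet x.1 // f x.1 w = x.2} where
  toFun y := ⟨⟨y.1.1, y.2.fst⟩, y.2.snd.1⟩
  invFun w := ⟨⟨w.1.1, f w.1.1 ⟨x.1, G.adj_symm w.1.2⟩⟩, w.1.2, w.2, rfl⟩
  left_inv y := Subtype.ext <| Sigma.ext rfl <| heq_of_eq y.2.snd.2
  right_inv _ := rfl

theorem degree_split (x : Σ v, P v) [Fintype ((G.split f).neighborSet x)]
    [Fintype {w : G.neighborSet x.1 // f x.1 w = x.2}] :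
    (G.split f).degree x = Fintype.card {w : G.neighborSet x.1 // f x.1 w = x.2} := by
  rw [← card_neighborSet_eq_degree]
  exact Fintype.card_congr (G.neighborSetSplitEquiv f x)

theorem exists_map_degree_eq_sum_replicate {V : Type} [Fintype V] (G : SimpleGraph V)
    [DecidableRel G.Adj] (b : V → ℕ) (hb : ∀ v, b v ∣ G.degree v) :
    ∃ (W : Type) (_ : Fintype W) (H : SimpleGraph W) (_ : DecidableRel H.Adj),
      univ.val.map (fun w => H.degree w) = ∑ v, Multiset.replicate (G.degree v / b v) (b v) := by
  have hf : ∀ v, ∃ f : G.neighborSet v → Fin (G.degree v / b v),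
      ∀ a, Fintype.card {w // f w = a} = b v := fun v => by
    refine Fintype.exists_card_fiber_eq _ ?_
    rw [card_neighborSet_eq_degree]
    simp [Nat.div_mul_cancel (hb v)]
  choose f hf using hf
  refine ⟨_, inferInstance, G.split f, Classical.decRel _,
    map_univ_sigma_eq_sum_replicate _ _ _ fun x => ?_⟩
  rw [degree_split, hf]

end SimpleGraph

theorem sum_Icc_one_eq_sum_range (d : ℕ → ℕ) (k : ℕ) :
    ∑ i ∈ Icc 1 k, d i = ∑ i ∈ range k, d (i + 1) := by
  rw [range_eq_Ico, sum_Ico_add' d 0 k 1]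
  rfl

theorem coe_seqD (n : ℕ) (d : ℕ → ℕ) (C : ℕ) : (seqD n d C : Multiset ℕ) =
    (range (n - 1)).val.map (fun i => d (i + 1)) + Multiset.replicate (C + 1) (d n) := by
  rw [seqD, ← Multiset.coe_add, ← Multiset.map_coe, Multiset.coe_replicate]
  rfl

theorem sum_seqD {n : ℕ} (hn : 0 < n) (d : ℕ → ℕ) (C : ℕ) :
    (seqD n d C).sum = ∑ i ∈ Icc 1 n, d i + C * d n := by
  obtain ⟨k, rfl⟩ : ∃ k, n = k + 1 := ⟨n - 1, by omega⟩
  rw [← Multiset.sum_coe, coe_seqD, Multiset.sum_add, sum_Icc_one_eq_sum_range, sum_range_succ,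
    Multiset.sum_replicate, ← Finset.sum_eq_multiset_sum, Nat.add_sub_cancel, smul_eq_mul]
  ring

theorem toFinset_seqD {n : ℕ} (hn : 0 < n) (d : ℕ → ℕ) (C : ℕ) :
    (seqD n d C).toFinset = (Icc 1 n).image d := by
  ext x
  simp only [seqD, List.mem_toFinset, List.mem_append, List.mem_map, List.mem_range,
    List.mem_replicate, mem_image, mem_Icc]
  constructor
  · rintro (⟨i, hi, rfl⟩ | ⟨-, rfl⟩)
    exacts [⟨i + 1, by omega, rfl⟩, ⟨n, by omega, rfl⟩]
  · rintro ⟨i, hi, rfl⟩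
    rcases eq_or_lt_of_le hi.2 with rfl | hlt
    · exact Or.inr ⟨by omega, rfl⟩
    · exact Or.inl ⟨i - 1, by omega, by rw [Nat.sub_add_cancel hi.1]⟩

theorem exists_degreeSet_eq {n : ℕ} {d : ℕ → ℕ} (hpos : ∀ i ∈ Icc 1 n, 0 < d i) :
    ∃ (V : Type) (_ : Fintype V) (G : SimpleGraph V) (_ : DecidableRel G.Adj),
      degreeSet G = (Icc 1 n).image d := by
  -- Split vertex `v` of the complete graph on `N + 1` vertices into vertices of degree
  -- `d (min (v + 1) n)`.
  set N := n * ∏ i ∈ Icc 1 n, d i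
  have hdvd : ∀ i ∈ Icc 1 n, d i ∣ N := fun i hi =>
    dvd_mul_of_dvd_right (dvd_prod_of_mem d hi) n
  have hnN : n ≤ N := Nat.le_mul_of_pos_right n (prod_pos hpos)
  let j : Fin (N + 1) → ℕ := fun v => min (v + 1) n
  have hj : ∀ v, 0 < n → j v ∈ Icc 1 n := fun v hn => by simp only [j, mem_Icc]; omega
  have hb : ∀ v, d (j v) ∣ (⊤ : SimpleGraph (Fin (N + 1))).degree v := fun v => by
    rcases Nat.eq_zero_or_pos n with hn | hn
    · simp [N, hn]
    · simpa using hdvd _ (hj v hn)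
  obtain ⟨W, _, H, _, hH⟩ := SimpleGraph.exists_map_degree_eq_sum_replicate _ _ hb
  refine ⟨W, inferInstance, H, inferInstance, ?_⟩
  change (univ.val.map fun w => H.degree w).toFinset = _
  ext x
  simp only [hH, Multiset.mem_toFinset, Multiset.mem_sum, Multiset.mem_replicate, mem_univ,
    true_and, mem_image, SimpleGraph.complete_graph_degree, Fintype.card_fin, Nat.add_sub_cancel]
  constructor
  · rintro ⟨v, hv, rfl⟩
    have hn : 0 < n := Nat.pos_of_ne_zero fun hn => hv (by simp [N, hn])
    exact ⟨j v, hj v hn, rfl⟩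
  · rintro ⟨i, hi, rfl⟩
    have hi' := mem_Icc.mp hi
    have hji : j ⟨i - 1, by omega⟩ = i := by simp only [j]; omega
    refine ⟨⟨i - 1, by omega⟩, ?_, by rw [hji]⟩
    rw [hji]
    have hN : 0 < N := Nat.mul_pos (by omega) (prod_pos hpos)
    exact (Nat.div_pos (Nat.le_of_dvd hN (hdvd i hi)) (hpos i hi)).ne'

theorem sum_replicate_div_ite_eq {V : Type*} [Fintype V] [DecidableEq V] (K : Finset V)
    (k : V → ℕ) (m : ℕ) (hK : ∀ v ∈ K, 0 < k v) :
    ∑ v, Multiset.replicate (k v / if v ∈ K then k v else m) (if v ∈ K then k v else m) =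
      K.val.map k + Multiset.replicate (∑ v ∈ Kᶜ, k v / m) m := by
  have hcompl := map_sum (Multiset.replicateAddMonoidHom m) (fun v => k v / m) Kᶜ
  simp only [Multiset.replicateAddMonoidHom_apply] at hcompl
  rw [← sum_add_sum_compl K, hcompl, ← Multiset.bind_singleton]
  congr 1
  · exact sum_congr rfl fun v hv => by simp [hv, Nat.div_self (hK v hv)]
  · exact sum_congr rfl fun v hv => by simp [mem_compl.mp hv]

theorem exists_finset_map_degree_eq {V : Type} [Fintype V] (G : SimpleGraph V)
    [DecidableRel G.Adj] {n : ℕ} (hn : 0 < n) {d : ℕ → ℕ} (hinj : Set.InjOn d (Icc 1 n))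
    (hG : degreeSet G = (Icc 1 n).image d) :
    ∃ K : Finset V, K.val.map (fun v => G.degree v) = (range (n - 1)).val.map (fun i => d (i + 1))
      ∧ ∃ v ∉ K, G.degree v = d n := by
  classical
  have hnn : n ∈ Icc 1 n := mem_Icc.mpr ⟨hn, le_rfl⟩
  have hmem : ∀ i ∈ Icc 1 n, ∃ v, G.degree v = d i := fun i hi => by
    simpa [← hG, degreeSet] using mem_image_of_mem d hi
  have hrange : ∀ i ∈ range (n - 1), i + 1 ∈ Icc 1 n := fun i hi => by
    rw [mem_range] at hi; rw [mem_Icc]; omega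
  have hd : Set.InjOn (fun i => d (i + 1)) (range (n - 1)) := fun i hi j hj h =>
    Nat.succ_injective (hinj (hrange i hi) (hrange j hj) h)
  obtain ⟨K, -, hKinj, hK⟩ := exists_subset_injOn_image_eq_of_surjOn (f := fun v => G.degree v)
    Set.univ ((range (n - 1)).image fun i => d (i + 1)) fun t ht => by
      obtain ⟨i, hi, rfl⟩ := mem_image.mp ht
      obtain ⟨v, hv⟩ := hmem _ (hrange i hi)
      exact ⟨v, trivial, hv⟩
  obtain ⟨v, hv⟩ := hmem n hnn
  refine ⟨K, ?_, v, fun hvK => ?_, hv⟩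
  · rw [← image_val_of_injOn hKinj, hK, image_val_of_injOn hd]
  have hdn : d n ∈ (range (n - 1)).image fun i => d (i + 1) := by
    rw [← hK, ← hv]; exact mem_image_of_mem _ hvK
  obtain ⟨i, hi, h⟩ := mem_image.mp hdn
  have := hinj (hrange i hi) hnn h
  rw [mem_range] at hi
  omega

theorem exists_isGraphic_seqD_of_degreeSet_eq {V : Type} [Fintype V] (G : SimpleGraph V)
    [DecidableRel G.Adj] {n : ℕ} (hn : 0 < n) {d : ℕ → ℕ} (hinj : Set.InjOn d (Icc 1 n))
    (hpos : ∀ i ∈ Icc 1 n, 0 < d i) (hdvd : ∀ i ∈ Icc 1 n, d n ∣ d i)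
    (hG : degreeSet G = (Icc 1 n).image d) :
    ∃ C, IsGraphic (seqD n d C) ∧ 2 * #G.edgeFinset = ∑ i ∈ Icc 1 n, d i + C * d n := by
  classical
  have hnn : n ∈ Icc 1 n := mem_Icc.mpr ⟨hn, le_rfl⟩
  have hdeg : ∀ v, ∃ i ∈ Icc 1 n, d i = G.degree v := fun v => by
    rw [← mem_image, ← hG]; exact mem_image_of_mem _ (mem_univ v)
  obtain ⟨K, hK, v₀, hv₀K, hv₀⟩ := exists_finset_map_degree_eq G hn hinj hG
  let b : V → ℕ := fun v => if v ∈ K then G.degree v else d n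
  have hb : ∀ v, b v ∣ G.degree v := fun v => by
    by_cases hv : v ∈ K
    · simp [b, hv]
    · obtain ⟨i, hi, hdi⟩ := hdeg v
      simpa [b, hv, ← hdi] using hdvd i hi
  obtain ⟨W, _, H, _, hH⟩ := G.exists_map_degree_eq_sum_replicate b hb
  obtain ⟨C, hC⟩ : ∃ C, ∑ v ∈ Kᶜ, G.degree v / d n = C + 1 := by
    refine Nat.exists_eq_add_of_le' ?_
    calc 1 = G.degree v₀ / d n := by rw [hv₀, Nat.div_self (hpos n hnn)]
      _ ≤ _ := single_le_sum (f := fun v => G.degree v / d n) (fun _ _ => Nat.zero_le _)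
        (mem_compl.mpr hv₀K)
  have hsplit :
      ∑ v, Multiset.replicate (G.degree v / b v) (b v) = (seqD n d C : Multiset ℕ) := by
    rw [sum_replicate_div_ite_eq K _ _ fun v _ => ?_, hK, hC, coe_seqD]
    obtain ⟨i, hi, hdi⟩ := hdeg v
    exact hdi ▸ hpos i hi
  refine ⟨C, isGraphic_of_map_degree_eq H (hH.trans hsplit), ?_⟩
  rw [← sum_seqD hn, ← Multiset.sum_coe, ← hsplit, Multiset.sum_sum,
    ← G.sum_degrees_eq_twice_card_edges]
  exact sum_congr rfl fun v _ => by
    rw [Multiset.sum_replicate, smul_eq_mul, Nat.div_mul_cancel (hb v)]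

/-- If the least element `d n` of `D = {d 1 > d 2 > … > d n}` divides every
element of `D`, then the least size of a graph with degree set `D` is
`(σ(D) + C⋆ ⬝ d n) / 2`, where `C⋆` is the least `C ≥ 0` such that
`d 1, …, d (n-1), (d n)_{C+1}` is graphic. -/
theorem lq_of_min_dvd (n : ℕ) (hn : 0 < n) (d : ℕ → ℕ)
    (hanti : ∀ i j, 1 ≤ i → i < j → j ≤ n → d j < d i)
    (hpos : ∀ i ∈ Finset.Icc 1 n, 0 < d i)
    (hdvd : ∀ i ∈ Finset.Icc 1 n, d n ∣ d i) :
    ∃ Cstar : ℕ, IsGraphic (seqD n d Cstar) ∧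
      (∀ C : ℕ, IsGraphic (seqD n d C) → Cstar ≤ C) ∧
      2 * lq ((Finset.Icc 1 n).image d) = (∑ i ∈ Finset.Icc 1 n, d i) + Cstar * d n := by
  have hinj : Set.InjOn d (Icc 1 n) := StrictAntiOn.injOn fun i hi j hj hij =>
    hanti i j (mem_Icc.mp hi).1 hij (mem_Icc.mp hj).2
  have hex : ∃ C, IsGraphic (seqD n d C) := by
    obtain ⟨V, _, G, _, hG⟩ := exists_degreeSet_eq hpos
    obtain ⟨C, hC, -⟩ := exists_isGraphic_seqD_of_degreeSet_eq G hn hinj hpos hdvd hG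
    exact ⟨C, hC⟩
  classical
  refine ⟨Nat.find hex, Nat.find_spec hex, fun C hC => Nat.find_min' hex hC, ?_⟩
  obtain ⟨G, inst, hG, hE⟩ := (Nat.find_spec hex).exists_degreeSet_eq
  rw [sum_seqD hn] at hE
  have hlq : lq ((Icc 1 n).image d) = #G.edgeFinset := by
    refine IsLeast.csInf_eq ⟨⟨_, G, inst, by rw [hG, toFinset_seqD hn], rfl⟩, ?_⟩
    rintro q ⟨p, G', inst', hG', rfl⟩
    obtain ⟨C, hC, hE'⟩ := exists_isGraphic_seqD_of_degreeSet_eq G' hn hinj hpos hdvd hG'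
    have := Nat.mul_le_mul_right (d n) (Nat.find_min' hex hC)
    omega
  rw [hlq, hE]
end

section
/- Let D be a set of positive integers with minimum element 2 and at least one odd element. Then there exists a graph with degree set D and exactly ℓ_q(D) edges whose degree sequence has exactly one copy of each element of D except possibly two copies of the smallest odd element of D and multiple copies of 2. -/
/-!
Only the multiset of degrees matters, so we work with multisets realizable by a graph with `q`
edges. The basic move detaches two edges `ux`, `vy` from `u` and `v` and attaches them to a new
vertex: the number of edges is unchanged, the degrees of `u` and `v` drop by one each, and a vertex
of degree `2` appears. Repeated with `u = v`, it cuts a vertex of degree `c + 2k` down to `c`.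

Take a realization of `D` with `lq D` edges and as many vertices as possible. If a degree
`e ∉ {2, m}` occurred twice, cutting one copy down to `2` (`e` even) or to `m` (`e` odd, so
`m < e`) would keep the degree set and add vertices. If `m = 2s + 3` occurred three times, detaching
an edge from each of two copies and cutting both down to `2` would do the same.
-/

open Finset

lemma sum_boole_sym2_eq {V : Type*} [Fintype V] [DecidableEq V] {u x : V} (hux : u ≠ x)
    (z : V) :
    (∑ b, if s(z, b) = s(u, x) then 1 else 0) =
      (if z = u then 1 else 0) + (if z = x then 1 else 0) := by
  by_cases hzu : z = u
  · subst hzu; simp [hux]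
  by_cases hzx : z = x
  · subst hzx; simp [Sym2.eq_swap (a := u), Ne.symm hux]
  · simp [hzu, hzx]

namespace SimpleGraph

section DegreeMultiset

variable {V : Type*} [Fintype V] (G : SimpleGraph V) [DecidableRel G.Adj]

def degreeMultiset : Multiset ℕ := univ.val.map fun v => G.degree v

lemma sum_degreeMultiset : G.degreeMultiset.sum = 2 * #G.edgeFinset := by
  rw [← G.sum_degrees_eq_twice_card_edges, Finset.sum_eq_multiset_sum]; rfl

lemma count_degreeMultiset (e : ℕ) : G.degreeMultiset.count e = #{v | G.degree v = e} := by
  simp only [degreeMultiset, Multiset.count_map, eq_comm (a := e)]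
  rfl

end DegreeMultiset

section DetachEdges

variable {V : Type*} (G : SimpleGraph V)

def detachEdges (u x v y : V) : SimpleGraph (Option V) where
  Adj
    | some a, some b => G.Adj a b ∧ s(a, b) ≠ s(u, x) ∧ s(a, b) ≠ s(v, y)
    | none, some b | some b, none => b = x ∨ b = y
    | none, none => False
  symm := ⟨by
    rintro (_ | a) (_ | b) h
    exacts [h, h, h, ⟨h.1.symm, by simpa [Sym2.eq_swap] using h.2⟩]⟩
  loopless := ⟨by
    rintro (_ | a) h
    exacts [h, G.loopless.irrefl a h.1]⟩

instance [DecidableEq V] [DecidableRel G.Adj] (u x v y : V) :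
    DecidableRel (G.detachEdges u x v y).Adj
  | some a, some b =>
    inferInstanceAs (Decidable (G.Adj a b ∧ s(a, b) ≠ s(u, x) ∧ s(a, b) ≠ s(v, y)))
  | none, some b => inferInstanceAs (Decidable (b = x ∨ b = y))
  | some b, none => inferInstanceAs (Decidable (b = x ∨ b = y))
  | none, none => instDecidableFalse

variable [Fintype V] [DecidableEq V] [DecidableRel G.Adj] {u x v y : V}

lemma degree_detachEdges_none (hxy : x ≠ y) :
    (G.detachEdges u x v y).degree none = 2 := by
  rw [← Nat.cast_id ((G.detachEdges u x v y).degree none), degree_eq_sum_if_adj,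
    Fintype.sum_option]
  simp [detachEdges, Finset.filter_or, Finset.filter_eq', hxy]

lemma degree_detachEdges_some (hux : G.Adj u x) (hvy : G.Adj v y) (hxy : x ≠ y)
    (hne : s(u, x) ≠ s(v, y)) (z : V) :
    (G.detachEdges u x v y).degree (some z) + (if z = u then 1 else 0) +
      (if z = v then 1 else 0) = G.degree z := by
  have hsplit : ∀ b, (if G.Adj z b then 1 else 0) =
      (if (G.detachEdges u x v y).Adj (some z) (some b) then 1 else 0) +
      (if s(z, b) = s(u, x) then 1 else 0) + (if s(z, b) = s(v, y) then 1 else 0) := by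
    intro b
    have h1 : s(z, b) = s(u, x) → G.Adj z b := fun h => by rwa [← G.mem_edgeSet, h]
    have h2 : s(z, b) = s(v, y) → G.Adj z b := fun h => by rwa [← G.mem_edgeSet, h]
    have h12 : s(z, b) = s(u, x) → s(z, b) ≠ s(v, y) := fun h => h ▸ hne
    change _ = (if G.Adj z b ∧ s(z, b) ≠ s(u, x) ∧ s(z, b) ≠ s(v, y) then 1 else 0) + _ + _
    split_ifs <;> first | omega | (exfalso; tauto)
  have hnone : (if (G.detachEdges u x v y).Adj (some z) none then 1 else 0) =
      (if z = x then 1 else 0) + (if z = y then 1 else 0) := by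
    change (if z = x ∨ z = y then 1 else 0) = _
    rcases eq_or_ne z x with rfl | hzx
    · simp [hxy]
    · simp [hzx]
  have hG := G.degree_eq_sum_if_adj (R := ℕ) z
  have hG' := (G.detachEdges u x v y).degree_eq_sum_if_adj (R := ℕ) (some z)
  rw [Fintype.sum_option, hnone] at hG'
  rw [Finset.sum_congr rfl (fun b _ => hsplit b), Finset.sum_add_distrib, Finset.sum_add_distrib,
    sum_boole_sym2_eq hux.ne, sum_boole_sym2_eq hvy.ne] at hG
  simp only [Nat.cast_id] at hG hG'
  omega

lemma card_edgeFinset_detachEdges (hux : G.Adj u x) (hvy : G.Adj v y) (hxy : x ≠ y)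
    (hne : s(u, x) ≠ s(v, y)) :
    #(G.detachEdges u x v y).edgeFinset = #G.edgeFinset := by
  have h := G.sum_degrees_eq_twice_card_edges
  have h' := (G.detachEdges u x v y).sum_degrees_eq_twice_card_edges
  rw [Fintype.sum_option, degree_detachEdges_none G hxy] at h'
  rw [← Finset.sum_congr rfl fun z _ => G.degree_detachEdges_some hux hvy hxy hne z,
    Finset.sum_add_distrib, Finset.sum_add_distrib] at h
  simp only [Finset.sum_ite_eq', Finset.mem_univ, if_true] at h
  omega

lemma degreeMultiset_detachEdges (hux : G.Adj u x) (hvy : G.Adj v y) (hxy : x ≠ y)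
    (hne : s(u, x) ≠ s(v, y)) :
    (G.detachEdges u x v y).degreeMultiset =
      2 ::ₘ univ.val.map fun z =>
        G.degree z - (if z = u then 1 else 0) - (if z = v then 1 else 0) := by
  have huniv : (univ : Finset (Option V)).val = none ::ₘ univ.val.map some := rfl
  rw [degreeMultiset, huniv, Multiset.map_cons, Multiset.map_map, degree_detachEdges_none G hxy]
  congr 1
  refine Multiset.map_congr rfl fun z _ => ?_
  have := G.degree_detachEdges_some hux hvy hxy hne z
  simp only [Function.comp_apply]
  omega

end DetachEdges

end SimpleGraph

open SimpleGraph

def Realizable (M : Multiset ℕ) (q : ℕ) : Prop :=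
  ∃ (p : ℕ) (G : SimpleGraph (Fin p)) (_ : DecidableRel G.Adj),
    G.degreeMultiset = M ∧ #G.edgeFinset = q

namespace Realizable

lemma of_graph {V : Type*} [Fintype V] (G : SimpleGraph V) [DecidableRel G.Adj] :
    Realizable G.degreeMultiset #G.edgeFinset := by
  classical
  let e := Fintype.equivFin V
  let f := SimpleGraph.Iso.map e G
  refine ⟨_, G.map e.toEmbedding, inferInstance, ?_, f.card_edgeFinset_eq.symm⟩
  rw [degreeMultiset, degreeMultiset, ← Multiset.map_univ_val_equiv e, Multiset.map_map]
  exact Multiset.map_congr rfl fun v _ => f.degree_eq v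

lemma detachEdges {V : Type*} [Fintype V] [DecidableEq V] {G : SimpleGraph V}
    [DecidableRel G.Adj] {u x v y : V} (hux : G.Adj u x) (hvy : G.Adj v y) (hxy : x ≠ y)
    (hne : s(u, x) ≠ s(v, y)) :
    Realizable (2 ::ₘ univ.val.map fun z =>
      G.degree z - (if z = u then 1 else 0) - (if z = v then 1 else 0)) #G.edgeFinset := by
  rw [← card_edgeFinset_detachEdges G hux hvy hxy hne,
    ← degreeMultiset_detachEdges G hux hvy hxy hne]
  exact of_graph _

variable {M : Multiset ℕ} {q : ℕ}

lemma split {d : ℕ} (h : Realizable ((d + 2) ::ₘ M) q) : Realizable (d ::ₘ 2 ::ₘ M) q := by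
  obtain ⟨p, G, _, hG, rfl⟩ := h
  obtain ⟨u, -, hu, hM⟩ := (Multiset.map_eq_cons _ _ _ _).2 hG
  obtain ⟨x, hx, y, hy, hxy⟩ := Finset.one_lt_card.1
    (show 1 < #(G.neighborFinset u) by rw [card_neighborFinset_eq_degree, hu]; omega)
  rw [mem_neighborFinset] at hx hy
  have hG' := detachEdges hx hy hxy fun h => hxy (Sym2.congr_right.1 h)
  rwa [← Multiset.cons_erase (Finset.mem_univ_val u), Multiset.map_cons, if_pos rfl, hu,
    Multiset.map_congr rfl (g := fun z => G.degree z), hM, Multiset.cons_swap] at hG'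
  intro z hz
  rw [if_neg (univ.nodup.mem_erase_iff.1 hz).1]
  rfl

lemma detach {a b : ℕ} (ha : 2 ≤ a) (h : Realizable ((a + 1) ::ₘ (b + 1) ::ₘ M) q) :
    Realizable (a ::ₘ b ::ₘ 2 ::ₘ M) q := by
  obtain ⟨p, G, _, hG, rfl⟩ := h
  obtain ⟨u, -, hu, hM₁⟩ := (Multiset.map_eq_cons _ _ _ _).2 hG
  obtain ⟨v, hv, hvb, hM⟩ := (Multiset.map_eq_cons _ _ _ _).2 hM₁
  have hvu : v ≠ u := (univ.nodup.mem_erase_iff.1 hv).1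
  obtain ⟨y, hy⟩ := (G.degree_pos_iff_exists_adj v).1 (by omega)
  obtain ⟨x, hx⟩ : (((G.neighborFinset u).erase v).erase y).Nonempty := by
    have h₁ := pred_card_le_card_erase (s := G.neighborFinset u) (a := v)
    have h₂ := pred_card_le_card_erase (s := (G.neighborFinset u).erase v) (a := y)
    rw [card_neighborFinset_eq_degree, hu] at h₁
    exact card_pos.1 (by omega)
  simp only [mem_erase, mem_neighborFinset] at hx
  obtain ⟨hxy, hxv, hux⟩ := hx
  have hne : s(u, x) ≠ s(v, y) := by simp [hvu.symm, hxv]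
  have hG' := detachEdges hux hy hxy hne
  rwa [← Multiset.cons_erase (Finset.mem_univ_val u), Multiset.map_cons, if_pos rfl,
    if_neg hvu.symm, hu, ← Multiset.cons_erase hv, Multiset.map_cons, if_neg hvu, if_pos rfl, hvb,
    Multiset.map_congr rfl (g := fun z => G.degree z), hM, Multiset.cons_swap 2,
    Multiset.cons_swap 2] at hG'
  intro z hz
  obtain ⟨hzv, hz⟩ := ((univ.nodup.erase u).mem_erase_iff).1 hz
  rw [if_neg (univ.nodup.mem_erase_iff.1 hz).1, if_neg hzv]
  rfl

lemma split_iterate {c : ℕ} :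
    ∀ {k : ℕ} {M : Multiset ℕ}, Realizable ((c + 2 * k) ::ₘ M) q →
      Realizable (c ::ₘ (Multiset.replicate k 2 + M)) q
  | 0, M, h => by simpa using h
  | k + 1, M, h => by
    have := split_iterate (k := k) (M := 2 ::ₘ M)
      (split (by rwa [Nat.mul_succ, ← Nat.add_assoc] at h))
    rwa [Multiset.add_cons, ← Multiset.cons_add, ← Multiset.replicate_succ] at this

lemma sum_eq (h : Realizable M q) : M.sum = 2 * q := by
  obtain ⟨p, G, _, rfl, rfl⟩ := h
  exact G.sum_degreeMultiset

end Realizable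

namespace SimpleGraph

def sigmaCliques {ι : Type*} (n : ι → ℕ) : SimpleGraph (Σ i, Fin (n i)) :=
  fromRel fun a b => a.1 = b.1

instance {ι : Type*} [DecidableEq ι] (n : ι → ℕ) : DecidableRel (sigmaCliques n).Adj :=
  fun a b => inferInstanceAs (Decidable (a ≠ b ∧ (a.1 = b.1 ∨ b.1 = a.1)))

lemma degree_sigmaCliques {ι : Type*} [Fintype ι] [DecidableEq ι] (n : ι → ℕ)
    (a : Σ i, Fin (n i)) : (sigmaCliques n).degree a = n a.1 - 1 := by
  have : (sigmaCliques n).neighborFinset a =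
      (univ.map (Function.Embedding.sigmaMk a.1)).erase a := by
    ext b
    rw [mem_neighborFinset]
    simp only [sigmaCliques, fromRel_adj, mem_erase, mem_map, mem_univ, true_and,
      Function.Embedding.sigmaMk_apply]
    constructor
    · obtain ⟨i, j⟩ := b
      rintro ⟨hab, h⟩
      obtain rfl : a.1 = i := by rcases h with h | h <;> simp_all
      exact ⟨hab.symm, j, rfl⟩
    · rintro ⟨hba, j, rfl⟩; exact ⟨Ne.symm hba, Or.inr rfl⟩
  rw [← card_neighborFinset_eq_degree, this, card_erase_of_mem (by simp), card_map, card_univ,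
    Fintype.card_fin]

end SimpleGraph

lemma exists_realizable (D : Finset ℕ) : ∃ M q, Realizable M q ∧ M.toFinset = D := by
  refine ⟨_, _, Realizable.of_graph (sigmaCliques fun n : D => n + 1), ?_⟩
  ext n
  simp only [degreeMultiset, degree_sigmaCliques, Nat.add_sub_cancel, Multiset.mem_toFinset,
    Multiset.mem_map, mem_univ_val, true_and]
  exact ⟨fun ⟨a, h⟩ => h ▸ a.1.2, fun hn => ⟨⟨⟨n, hn⟩, 0⟩, rfl⟩⟩

lemma exists_realizable_lq (D : Finset ℕ) : ∃ M, Realizable M (lq D) ∧ M.toFinset = D := by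
  obtain ⟨_, _, ⟨p, G, _, rfl, rfl⟩, rfl⟩ := exists_realizable D
  obtain ⟨p', G', _, hD, hq⟩ := Nat.sInf_mem (s := {q | ∃ (p : ℕ) (G : SimpleGraph (Fin p))
    (_ : DecidableRel G.Adj), degreeSet G = _ ∧ #G.edgeFinset = q}) ⟨_, p, G, _, rfl, rfl⟩
  exact ⟨_, ⟨p', G', _, rfl, hq⟩, hD⟩

section MaximalRealization

variable {D : Finset ℕ} {m q : ℕ} {M : Multiset ℕ}

lemma exists_card_lt_of_two_le_count (h2 : 2 ∈ D) (hmin : ∀ x ∈ D, 2 ≤ x) (hm : m ∈ D)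
    (hmodd : Odd m) (hmleast : ∀ x ∈ D, Odd x → m ≤ x) (hM : Realizable M q)
    (hMD : M.toFinset = D) {e : ℕ} (he2 : e ≠ 2) (hem : e ≠ m) (he : 2 ≤ M.count e) :
    ∃ M', Realizable M' q ∧ M'.toFinset = D ∧ Multiset.card M < Multiset.card M' := by
  subst hMD
  obtain ⟨M₀, rfl⟩ :=
    Multiset.exists_cons_of_mem (Multiset.count_pos.1 (by omega : 0 < M.count e))
  rw [Multiset.count_cons_self] at he
  have heM₀ : e ∈ M₀ := Multiset.count_pos.1 (by omega)
  simp only [Multiset.mem_toFinset, Multiset.mem_cons] at h2 hmin hm hmleast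
  obtain ⟨c, k, hc, hk, rfl⟩ : ∃ c k, c ∈ M₀ ∧ 0 < k ∧ e = c + 2 * k := by
    have := hmin e (Or.inl rfl)
    rcases Nat.even_or_odd e with ⟨j, hj⟩ | hodd
    · exact ⟨2, j - 1, h2.resolve_left (Ne.symm he2), by omega, by omega⟩
    · have := hmleast e (Or.inl rfl) hodd
      obtain ⟨j, hj⟩ := hodd
      obtain ⟨i, hi⟩ := hmodd
      exact ⟨m, j - i, hm.resolve_left (Ne.symm hem), by omega, by omega⟩
  refine ⟨c ::ₘ (Multiset.replicate k 2 + M₀), hM.split_iterate, ?_, by simp; omega⟩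
  ext x
  simp only [Multiset.mem_toFinset, Multiset.mem_cons, Multiset.mem_add, Multiset.mem_replicate]
  have h2₀ := h2.resolve_left (Ne.symm he2)
  constructor
  · rintro (rfl | ⟨-, rfl⟩ | h) <;> simp_all
  · rintro (rfl | h) <;> simp_all

lemma exists_card_lt_of_three_le_count (h2 : 2 ∈ D) (hmin : ∀ x ∈ D, 2 ≤ x) (hm : m ∈ D)
    (hmodd : Odd m) (hM : Realizable M q) (hMD : M.toFinset = D) (hcount : 3 ≤ M.count m) :
    ∃ M', Realizable M' q ∧ M'.toFinset = D ∧ Multiset.card M < Multiset.card M' := by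
  subst hMD
  obtain ⟨M₁, rfl⟩ :=
    Multiset.exists_cons_of_mem (Multiset.count_pos.1 (by omega : 0 < M.count m))
  rw [Multiset.count_cons_self] at hcount
  obtain ⟨M₀, rfl⟩ :=
    Multiset.exists_cons_of_mem (Multiset.count_pos.1 (by omega : 0 < M₁.count m))
  rw [Multiset.count_cons_self] at hcount
  have hmM₀ : m ∈ M₀ := Multiset.count_pos.1 (by omega)
  simp only [Multiset.mem_toFinset, Multiset.mem_cons] at h2 hmin hm
  obtain ⟨s, rfl⟩ : ∃ s, m = 2 + 2 * s + 1 := by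
    have := hmin m (Or.inl rfl)
    obtain ⟨i, hi⟩ := hmodd
    exact ⟨i - 1, by omega⟩
  have h2₀ : 2 ∈ M₀ := by
    rcases h2 with h | h | h
    · omega
    · omega
    · exact h
  have h₁ := hM.detach (by omega)
  have h₂ := Realizable.split_iterate (c := 2) (k := s) h₁
  rw [Multiset.add_cons, Multiset.cons_swap] at h₂
  refine ⟨_, h₂.split_iterate, ?_, by simp; omega⟩
  ext x
  simp only [Multiset.mem_toFinset, Multiset.mem_cons, Multiset.mem_add, Multiset.mem_replicate]
  constructor
  · rintro (rfl | ⟨-, rfl⟩ | rfl | ⟨-, rfl⟩ | rfl | h) <;> simp_all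
  · rintro (rfl | rfl | h) <;> simp_all

theorem exists_realizable_almost_distinct (h2 : 2 ∈ D) (hmin : ∀ x ∈ D, 2 ≤ x)
    (hm : m ∈ D) (hmodd : Odd m) (hmleast : ∀ x ∈ D, Odd x → m ≤ x)
    (h : ∃ M, Realizable M q ∧ M.toFinset = D) :
    ∃ M, Realizable M q ∧ M.toFinset = D ∧
      (∀ e ∈ D, e ≠ 2 → e ≠ m → M.count e = 1) ∧ (M.count m = 1 ∨ M.count m = 2) := by
  let S := {n | ∃ M, Realizable M q ∧ M.toFinset = D ∧ Multiset.card M = n}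
  have hbdd : BddAbove S := by
    refine ⟨q, ?_⟩
    rintro _ ⟨M, hM, rfl, rfl⟩
    have := Multiset.card_nsmul_le_sum (fun x hx => hmin x (Multiset.mem_toFinset.2 hx))
    rw [hM.sum_eq, smul_eq_mul] at this
    omega
  obtain ⟨M, hM, hMD, hcard⟩ : sSup S ∈ S :=
    Nat.sSup_mem (by obtain ⟨M, hM⟩ := h; exact ⟨_, M, hM.1, hM.2, rfl⟩) hbdd
  have hmax : ∀ M', Realizable M' q → M'.toFinset = D →
      ¬ Multiset.card M < Multiset.card M' :=
    fun M' h h' => not_lt.2 (hcard ▸ le_csSup hbdd ⟨M', h, h', rfl⟩)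
  have hpos : ∀ e ∈ D, 0 < M.count e := fun e he =>
    Multiset.count_pos.2 (Multiset.mem_toFinset.1 (hMD ▸ he))
  refine ⟨M, hM, hMD, fun e he he2 hem => ?_, ?_⟩
  · by_contra hne
    obtain ⟨M', h, h', hlt⟩ := exists_card_lt_of_two_le_count h2 hmin hm hmodd hmleast hM hMD
      he2 hem (by have := hpos e he; omega)
    exact hmax M' h h' hlt
  · by_contra hne
    obtain ⟨M', h, h', hlt⟩ := exists_card_lt_of_three_le_count h2 hmin hm hmodd hM hMD
      (by have := hpos m hm; omega)
    exact hmax M' h h' hlt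

end MaximalRealization

/-- For a degree set `D` with minimum `2` containing an odd element `m` (the
smallest odd element), some optimal graph has exactly one vertex of each degree
in `D` other than `2`, except possibly two vertices of degree `m`. -/
theorem optimal_graph_min_two (D : Finset ℕ) (h2 : 2 ∈ D) (hmin : ∀ x ∈ D, 2 ≤ x)
    (m : ℕ) (hm : m ∈ D) (hmodd : Odd m) (hmleast : ∀ x ∈ D, Odd x → m ≤ x) :
    ∃ (p : ℕ) (G : SimpleGraph (Fin p)) (inst : DecidableRel G.Adj),
      @degreeSet _ _ G inst = D ∧
      (@SimpleGraph.edgeFinset _ G (@SimpleGraph.fintypeEdgeSet _ G _ inst)).card = lq D ∧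
      (∀ e ∈ D, e ≠ 2 → e ≠ m →
        (Finset.univ.filter fun v => @SimpleGraph.degree _ G v
          (@SimpleGraph.neighborSetFintype _ G _ inst v) = e).card = 1) ∧
      ((Finset.univ.filter fun v => @SimpleGraph.degree _ G v
          (@SimpleGraph.neighborSetFintype _ G _ inst v) = m).card = 1 ∨
       (Finset.univ.filter fun v => @SimpleGraph.degree _ G v
          (@SimpleGraph.neighborSetFintype _ G _ inst v) = m).card = 2) := by
  obtain ⟨_, ⟨p, G, inst, rfl, hq⟩, hD, hcount, hcount_m⟩ :=
    exists_realizable_almost_distinct h2 hmin hm hmodd hmleast (exists_realizable_lq D)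
  refine ⟨p, G, inst, hD, hq, fun e he he2 hem => ?_, ?_⟩
  · rw [← count_degreeMultiset]
    exact hcount e he he2 hem
  · simpa only [← count_degreeMultiset] using hcount_m
end

section
/- Let D = {d_1 > ... > d_n} be a set of positive integers, and let s̄ = a_1, ..., a_p be the canonical graphic sequence with degree set D consisting of one copy of each d_i (with possibly one extra copy of the smallest odd element when σ(D) is odd and d_n is even) and the minimum number of additional copies of d_n needed to make the sequence graphic. If s̄' = a'_1, ..., a'_{p'} is any graphic sequence with degree set D, then a_i ≤ a'_i for all 1 ≤ i ≤ min{p, p'}. -/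
/-- Single copies of `d 1, …, d (n-1)`, duplicating the smallest odd element
`d r` when `σ(D)` is odd and `d n` is even. -/
def canonBase (n : ℕ) (d : ℕ → ℕ) (r : ℕ) : List ℕ :=
  if Even (∑ i ∈ Finset.Icc 1 n, d i) ∨ Odd (d n) then
    (List.range (n - 1)).map (fun i => d (i + 1))
  else
    (List.range r).map (fun i => d (i + 1)) ++ [d r]
      ++ (List.range (n - 1 - r)).map (fun i => d (r + i + 1))

/-- The canonical candidate sequence: `canonBase` followed by `C + 1` copies of
`d n`. -/
def canonSeq (n : ℕ) (d : ℕ → ℕ) (r : ℕ) (C : ℕ) : List ℕ :=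
  canonBase n d r ++ List.replicate (C + 1) (d n)

open Finset

theorem IsGraphic.even_sum {s : List ℕ} (h : IsGraphic s) : Even s.sum := by
  obtain ⟨G, _, hG⟩ := h
  have hsum : s.sum = ∑ v, G.degree v := by
    simp only [hG, ← List.sum_ofFn, List.ofFn_get]
  rw [hsum, G.sum_degrees_eq_twice_card_edges]
  exact even_two_mul _

theorem List.exists_odd_two_le_count_of_even_sum {l : List ℕ} (hl : Even l.sum)
    (hodd : Odd (∑ x ∈ l.toFinset, x)) : ∃ x, Odd x ∧ 2 ≤ l.count x := by
  by_contra! h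
  have hsum : l.sum = ∑ x ∈ l.toFinset, x + ∑ x ∈ l.toFinset, (l.count x - 1) * x := by
    rw [Finset.sum_list_count, ← Finset.sum_add_distrib]
    refine Finset.sum_congr rfl fun x hx => ?_
    obtain ⟨c, hc⟩ :=
      Nat.exists_eq_add_one_of_ne_zero (List.count_pos_iff.2 (List.mem_toFinset.1 hx)).ne'
    rw [hc, smul_eq_mul, Nat.add_sub_cancel]
    ring
  have hrest : Even (∑ x ∈ l.toFinset, (l.count x - 1) * x) := by
    refine Finset.even_sum _ fun x _ => ?_
    rcases Nat.even_or_odd x with hx | hx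
    · exact hx.mul_left _
    · simp [show l.count x - 1 = 0 by have := h x hx; omega]
  rw [hsum, Nat.even_add] at hl
  exact Nat.not_even_iff_odd.2 hodd (hl.2 hrest)

theorem List.Pairwise.le_getElem_of_lt_countP {α : Type*} [LinearOrder α] {s : List α}
    (hs : s.Pairwise (· ≥ ·)) {a : α} {i : ℕ} (hi : i < s.length)
    (hc : i < s.countP (fun x => a ≤ x)) : a ≤ s[i] := by
  by_contra! h
  have hdrop : (s.drop i).countP (fun x => a ≤ x) = 0 := by
    have hp := hs.drop (i := i)
    rw [List.drop_eq_getElem_cons hi, List.pairwise_cons] at hp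
    rw [List.drop_eq_getElem_cons hi, List.countP_eq_zero]
    rintro x hx
    rcases List.mem_cons.1 hx with rfl | hx
    · simpa using h
    · simpa using (hp.1 x hx).trans_lt h
  have htake : (s.take i).countP (fun x => a ≤ x) ≤ i :=
    List.countP_le_length.trans (List.length_take_le _ _)
  rw [← List.take_append_drop i s, List.countP_append] at hc
  omega

theorem Finset.card_le_countP {α : Type*} {p : α → Bool} {F : Finset α} {s : List α}
    (hF : ∀ x ∈ F, x ∈ s) (hp : ∀ x ∈ F, p x) : #F ≤ s.countP p := by
  have hle : F.val ≤ (s : Multiset α) := (Multiset.le_iff_subset F.nodup).2 hF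
  calc #F = F.val.countP (p ·) := (Multiset.countP_eq_card.2 hp).symm
    _ ≤ (s : Multiset α).countP (p ·) := Multiset.countP_le_of_le _ hle
    _ = s.countP p := by simp

theorem Finset.card_lt_countP {α : Type*} [DecidableEq α] {p : α → Bool} {F : Finset α}
    {s : List α} (hF : ∀ x ∈ F, x ∈ s) (hp : ∀ x ∈ F, p x) {a : α} (ha : a ∈ F)
    (h2 : 2 ≤ s.count a) : #F < s.countP p := by
  have has : a ∈ s := hF a ha
  have hF' : ∀ x ∈ F, x ∈ s.erase a := fun x hx => by
    by_cases hxa : x = a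
    · subst hxa
      exact List.count_pos_iff.1 (by rw [List.count_erase_self]; omega)
    · exact (List.mem_erase_of_ne hxa).2 (hF x hx)
  have hle := card_le_countP hF' hp
  have hpos := List.countP_pos_iff.2 ⟨a, has, hp a ha⟩
  rw [List.countP_erase, if_pos ⟨has, hp a ha⟩] at hle
  omega

section DegreeSet

variable {n : ℕ} {d : ℕ → ℕ} {s : List ℕ}
  (hd : StrictAntiOn d (Set.Icc 1 n)) (hs : s.toFinset = (Icc 1 n).image d)
include hd hs

theorem mem_and_apply_le_of_mem_image_Icc {k x : ℕ} (hk : k ≤ n) (hx : x ∈ (Icc 1 k).image d) :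
    x ∈ s ∧ d k ≤ x := by
  obtain ⟨j, hj, rfl⟩ := Finset.mem_image.1 hx
  rw [Finset.mem_Icc] at hj
  refine ⟨?_, hd.antitoneOn ⟨hj.1, hj.2.trans hk⟩ ⟨hj.1.trans hj.2, hk⟩ hj.2⟩
  rw [← List.mem_toFinset, hs]
  exact Finset.mem_image_of_mem d (Finset.mem_Icc.2 ⟨hj.1, hj.2.trans hk⟩)

omit hs in
theorem card_image_Icc {k : ℕ} (hk : k ≤ n) : #((Icc 1 k).image d) = k := by
  rw [Finset.card_image_of_injOn, Nat.card_Icc, Nat.add_sub_cancel]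
  exact hd.injOn.mono fun j hj => by simp only [coe_Icc, Set.mem_Icc] at hj ⊢; omega

theorem le_countP_apply_le {k : ℕ} (hk : k ≤ n) : k ≤ s.countP (fun x => d k ≤ x) := by
  have := Finset.card_le_countP (p := fun x => d k ≤ x)
    (fun x hx => (mem_and_apply_le_of_mem_image_Icc hd hs hk hx).1)
    (fun x hx => by simpa using (mem_and_apply_le_of_mem_image_Icc hd hs hk hx).2)
  rwa [card_image_Icc hd hk] at this

theorem lt_countP_apply_le {j k : ℕ} (hj : 1 ≤ j) (hjk : j ≤ k) (hk : k ≤ n)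
    (h2 : 2 ≤ s.count (d j)) : k < s.countP (fun x => d k ≤ x) := by
  have := Finset.card_lt_countP (p := fun x => d k ≤ x)
    (fun x hx => (mem_and_apply_le_of_mem_image_Icc hd hs hk hx).1)
    (fun x hx => by simpa using (mem_and_apply_le_of_mem_image_Icc hd hs hk hx).2)
    (Finset.mem_image_of_mem d (Finset.mem_Icc.2 ⟨hj, hjk⟩)) h2
  rwa [card_image_Icc hd hk] at this

theorem countP_apply_le_eq_length : s.countP (fun x => d n ≤ x) = s.length := by
  refine List.countP_eq_length.2 fun x hx => ?_
  rw [← List.mem_toFinset, hs] at hx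
  simpa using (mem_and_apply_le_of_mem_image_Icc hd hs le_rfl hx).2

theorem exists_odd_two_le_count (hg : Even s.sum) (hodd : Odd (∑ i ∈ Icc 1 n, d i)) :
    ∃ j ∈ Icc 1 n, Odd (d j) ∧ 2 ≤ s.count (d j) := by
  have hsum : ∑ x ∈ s.toFinset, x = ∑ i ∈ Icc 1 n, d i := by
    rw [hs, Finset.sum_image (hd.injOn.mono (by simp))]
  rw [← hsum] at hodd
  obtain ⟨x, hxodd, hx2⟩ := List.exists_odd_two_le_count_of_even_sum hg hodd
  have hx : x ∈ (Icc 1 n).image d := by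
    rw [← hs, List.mem_toFinset]
    exact List.count_pos_iff.1 (by omega)
  obtain ⟨j, hj, rfl⟩ := Finset.mem_image.1 hx
  exact ⟨j, hj, hxodd, hx2⟩

end DegreeSet

section Canonical

variable {n : ℕ} {d : ℕ → ℕ} {r C i : ℕ}

theorem canonSeq_getD_of_even (h : Even (∑ i ∈ Icc 1 n, d i) ∨ Odd (d n))
    (hi : i < (canonSeq n d r C).length) : (canonSeq n d r C).getD i 0 = d (min (i + 1) n) := by
  simp only [canonSeq, canonBase, if_pos h, List.length_append, List.length_map,
    List.length_range, List.length_replicate] at hi ⊢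
  rcases lt_or_ge i (n - 1) with h1 | h1
  · rw [List.getD_append _ _ _ _ (by simpa using h1)]
    simp [h1, show i + 1 ≤ n by omega]
  · rw [List.getD_append_right _ _ _ _ (by simpa using h1)]
    simp [List.getD_eq_getElem?_getD, show i - (n - 1) < C + 1 by omega, show n ≤ i + 1 by omega]

theorem canonSeq_getD_of_not_even (h : ¬(Even (∑ i ∈ Icc 1 n, d i) ∨ Odd (d n))) (hr : r < n)
    (hi : i < (canonSeq n d r C).length) :
    (canonSeq n d r C).getD i 0 = d (min (if i < r then i + 1 else i) n) := by
  simp only [canonSeq, canonBase, if_neg h, List.length_append, List.length_map,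
    List.length_range, List.length_replicate, List.length_singleton] at hi ⊢
  rcases lt_or_ge i n with h1 | h1
  · rw [List.getD_append _ _ _ _ (by grind)]
    rcases lt_trichotomy i r with h2 | rfl | h2
    · rw [List.getD_append _ _ _ _ (by grind), List.getD_append _ _ _ _ (by simpa using h2)]
      simp [h2, show i + 1 ≤ n by omega]
    · rw [List.getD_append _ _ _ _ (by simp), List.getD_append_right _ _ _ _ (by simp)]
      simp [h1.le]
    · rw [List.getD_append_right _ _ _ _ (by grind)]
      simp [show ¬ i < r by omega, h1.le, List.getD_eq_getElem?_getD,
        show i - (r + 1) < n - 1 - r by omega, show r + (i - (r + 1)) + 1 = i by omega]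
  · rw [List.getD_append_right _ _ _ _ (by grind)]
    simp [show ¬ i < r by omega, h1, List.getD_eq_getElem?_getD,
      show i - (r + (n - 1 - r + 1)) < C + 1 by omega]

end Canonical

theorem canonical_termwise_least_general (n : ℕ) (d : ℕ → ℕ)
    (hanti : ∀ i j, 1 ≤ i → i < j → j ≤ n → d j < d i)
    (r : ℕ)
    (hr : ¬(Even (∑ i ∈ Finset.Icc 1 n, d i) ∨ Odd (d n)) →
      r ∈ Finset.Icc 1 n ∧ Odd (d r) ∧ ∀ i ∈ Finset.Icc 1 n, Odd (d i) → i ≤ r)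
    (Cstar : ℕ) :
    ∀ s' : List ℕ, s'.Pairwise (· ≥ ·) → IsGraphic s' →
      s'.toFinset = (Finset.Icc 1 n).image d →
      ∀ i : ℕ, i < (canonSeq n d r Cstar).length → i < s'.length →
        (canonSeq n d r Cstar).getD i 0 ≤ s'.getD i 0 := by
  intro s' hsorted hg hset i hi hi'
  have hd : StrictAntiOn d (Set.Icc 1 n) := fun a ha b hb hab => hanti a b ha.1 hab hb.2
  rw [List.getD_eq_getElem _ _ hi']
  refine hsorted.le_getElem_of_lt_countP hi' ?_
  by_cases hc : Even (∑ i ∈ Finset.Icc 1 n, d i) ∨ Odd (d n)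
  · rw [canonSeq_getD_of_even hc hi]
    rcases le_or_gt n (i + 1) with h | h
    · rwa [min_eq_right h, countP_apply_le_eq_length hd hset]
    · rw [min_eq_left h.le]
      exact le_countP_apply_le hd hset h.le
  · obtain ⟨hrIcc, hrodd, hrmax⟩ := hr hc
    have hrn : r < n := (Finset.mem_Icc.1 hrIcc).2.lt_of_ne fun h => hc (Or.inr (h ▸ hrodd))
    obtain ⟨j, hj, hjodd, hj2⟩ :=
      exists_odd_two_le_count hd hset hg.even_sum (Nat.not_even_iff_odd.1 (not_or.1 hc).1)
    have hjr := hrmax j hj hjodd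
    rw [canonSeq_getD_of_not_even hc hrn hi]
    rcases lt_or_ge i r with h1 | h1
    · rw [if_pos h1, min_eq_left (by omega)]
      exact le_countP_apply_le hd hset (by omega)
    · rcases lt_or_ge i n with h2 | h2
      · rw [if_neg (by omega), min_eq_left h2.le]
        exact lt_countP_apply_le hd hset (Finset.mem_Icc.1 hj).1 (hjr.trans h1) h2.le hj2
      · rwa [if_neg (by omega), min_eq_right h2, countP_apply_le_eq_length hd hset]

/-- Lemma 5.1: the canonical graphic sequence `s̄` with degree set `D`
(single copies of each `dᵢ`, duplicating the smallest odd element when `σ(D)` is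
odd and `d n` is even, with the minimal number of copies of `d n` making it
graphic) is termwise dominated by every graphic sequence with degree set `D`. -/
theorem canonical_termwise_least (n : ℕ) (hn : 0 < n) (d : ℕ → ℕ)
    (hanti : ∀ i j, 1 ≤ i → i < j → j ≤ n → d j < d i)
    (hpos : ∀ i ∈ Finset.Icc 1 n, 0 < d i)
    (r : ℕ)
    (hr : ¬(Even (∑ i ∈ Finset.Icc 1 n, d i) ∨ Odd (d n)) →
      r ∈ Finset.Icc 1 n ∧ Odd (d r) ∧ ∀ i ∈ Finset.Icc 1 n, Odd (d i) → i ≤ r)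
    (Cstar : ℕ) (hCg : IsGraphic (canonSeq n d r Cstar))
    (hCmin : ∀ C : ℕ, IsGraphic (canonSeq n d r C) → Cstar ≤ C) :
    ∀ s' : List ℕ, s'.Pairwise (· ≥ ·) → IsGraphic s' →
      s'.toFinset = (Finset.Icc 1 n).image d →
      ∀ i : ℕ, i < (canonSeq n d r Cstar).length → i < s'.length →
        (canonSeq n d r Cstar).getD i 0 ≤ s'.getD i 0 :=
  canonical_termwise_least_general n d hanti r hr Cstar
end
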